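/- arXiv:1709.10081 — 10 statements merged into one kernel-verified Lean document; each statement's English description precedes it below -/
import Mathlib

section
/- Let A be an n×n complex matrix having a zero cross at each of the distinct positions z_1,…,z_m, let t_1,…,t_m ∈ [0,1], and let k ∈ {1,…,n} \ {z_1,…,z_m}. Set B = u_{(k z_m)}(t_m) ⋯ u_{(k z_1)}(t_1) · A · u_{(k z_1)}(t_1)* ⋯ u_{(k z_m)}(t_m)*. Then: (1) if i and j are both not in {k, z_1,…,z_m}, then B_{i,j} = A_{i,j}; (2) if i ∈ {k, z_1,…,z_m} and j ∉ {k, z_1,…,z_m}, then B_{i,j} ≠ 0 only if A_{k,j} ≠ 0; (3) if j ∈ {k, z_1,…,z_m} and i ∉ {k, z_1,…,z_m}, then B_{i,j} ≠ 0 only if A_{i,k} ≠ 0. -/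
open Matrix

/-- `A` has a zero cross at position `k`: row `k` and column `k` vanish. -/
def HasZeroCross {n : ℕ} (A : Matrix (Fin n) (Fin n) ℂ) (k : Fin n) : Prop :=
  (∀ j, A k j = 0) ∧ (∀ i, A i k = 0)

/-!
Every factor `u (k, z l) (t l)` agrees with the identity outside the rows and columns indexed
by `S = {k, z 0, …, z (m-1)}`, hence so does their product `P`. Conjugating by `P` therefore
leaves rows and columns outside `S` alone, and an entry `B i j` with `i ∈ S`, `j ∉ S` is
`∑_{p ∈ S} P i p A p j`. All rows `z l` of `A` vanish, so only `p = k` survives: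
`B i j = P i k * A k j`. Columns are symmetric.
-/

namespace Matrix

variable {ι α : Type*} [DecidableEq ι]

def IsIdentityOff [Zero α] [One α] (S : Set ι) (M : Matrix ι ι α) : Prop :=
  ∀ i j, (i ∉ S ∨ j ∉ S) → M i j = (1 : Matrix ι ι α) i j

namespace IsIdentityOff

theorem apply_eq_zero [Zero α] [One α] {S : Set ι} {M : Matrix ι ι α} (hM : IsIdentityOff S M)
    {i j : ι} (hij : i ∉ S ∨ j ∉ S) (hne : i ≠ j) : M i j = 0 := by
  rw [hM i j hij, one_apply_ne hne]

theorem one [Zero α] [One α] {S : Set ι} : IsIdentityOff S (1 : Matrix ι ι α) :=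
  fun _ _ _ => rfl

section Semiring

variable [Fintype ι] [Semiring α] {S : Set ι} {M N : Matrix ι ι α}

theorem mul_apply_of_notMem_left (hM : IsIdentityOff S M) (X : Matrix ι ι α) {i : ι}
    (hi : i ∉ S) (j : ι) : (M * X) i j = X i j := by
  simp [mul_apply, hM i _ (Or.inl hi), one_apply]

theorem mul_apply_of_notMem_right (hM : IsIdentityOff S M) (X : Matrix ι ι α) (i : ι) {j : ι}
    (hj : j ∉ S) : (X * M) i j = X i j := by
  simp [mul_apply, hM _ j (Or.inr hj), one_apply]

theorem mul (hM : IsIdentityOff S M) (hN : IsIdentityOff S N) : IsIdentityOff S (M * N) := by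
  rintro i j (hi | hj)
  · rw [hM.mul_apply_of_notMem_left N hi, hN i j (Or.inl hi)]
  · rw [hN.mul_apply_of_notMem_right M i hj, hM i j (Or.inr hj)]

theorem list_prod {L : List (Matrix ι ι α)} (hL : ∀ M ∈ L, IsIdentityOff S M) :
    IsIdentityOff S L.prod := by
  induction L with
  | nil => exact one
  | cons M L ih =>
    rw [List.prod_cons]
    exact (hL M List.mem_cons_self).mul (ih fun N hN => hL N (List.mem_cons_of_mem M hN))

theorem mul_apply_of_mem_left (hM : IsIdentityOff S M) {X : Matrix ι ι α} {i j : ι}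
    (hi : i ∈ S) (k : ι) (hX : ∀ p ∈ S, p ≠ k → X p j = 0) :
    (M * X) i j = M i k * X k j := by
  rw [mul_apply, Finset.sum_eq_single k _ (by simp)]
  intro p _ hpk
  by_cases hp : p ∈ S
  · rw [hX p hp hpk, mul_zero]
  · rw [hM.apply_eq_zero (Or.inr hp) (ne_of_mem_of_not_mem hi hp), zero_mul]

theorem mul_apply_of_mem_right (hM : IsIdentityOff S M) {X : Matrix ι ι α} {i j : ι}
    (hj : j ∈ S) (k : ι) (hX : ∀ q ∈ S, q ≠ k → X i q = 0) :
    (X * M) i j = X i k * M k j := by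
  rw [mul_apply, Finset.sum_eq_single k _ (by simp)]
  intro q _ hqk
  by_cases hq : q ∈ S
  · rw [hX q hq hqk, zero_mul]
  · rw [hM.apply_eq_zero (Or.inl hq) (ne_of_mem_of_not_mem hj hq).symm, mul_zero]

end Semiring

theorem conjTranspose [Semiring α] [StarRing α] {S : Set ι} {M : Matrix ι ι α}
    (hM : IsIdentityOff S M) : IsIdentityOff S Mᴴ := by
  intro i j hij
  rw [conjTranspose_apply, hM j i hij.symm, ← conjTranspose_apply, conjTranspose_one]

end IsIdentityOff

end Matrix

theorem zero_cross_conjugation_entries_general {n m : ℕ}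
    (u : Fin n → Fin n → ℝ → Matrix (Fin n) (Fin n) ℂ)
    (hu_delta : ∀ a b : Fin n, a ≠ b → ∀ t ∈ Set.Icc (0 : ℝ) 1, ∀ i j : Fin n,
      ((i ≠ a ∧ i ≠ b) ∨ (j ≠ a ∧ j ≠ b)) → u a b t i j = if i = j then 1 else 0)
    (A : Matrix (Fin n) (Fin n) ℂ)
    (z : Fin m → Fin n)
    (hA : ∀ l, HasZeroCross A (z l))
    (t : Fin m → ℝ) (ht : ∀ l, t l ∈ Set.Icc (0 : ℝ) 1)
    (k : Fin n) (hk : ∀ l, k ≠ z l)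
    (B : Matrix (Fin n) (Fin n) ℂ)
    (hB : B = (List.ofFn fun l : Fin m => u k (z l) (t l)).reverse.prod * A *
      ((List.ofFn fun l : Fin m => u k (z l) (t l)).reverse.prod)ᴴ) :
    (∀ i j : Fin n, (i ≠ k ∧ ∀ l, i ≠ z l) → (j ≠ k ∧ ∀ l, j ≠ z l) → B i j = A i j) ∧
    (∀ i j : Fin n, (i = k ∨ ∃ l, i = z l) → (j ≠ k ∧ ∀ l, j ≠ z l) →
      B i j ≠ 0 → A k j ≠ 0) ∧
    (∀ i j : Fin n, (j = k ∨ ∃ l, j = z l) → (i ≠ k ∧ ∀ l, i ≠ z l) →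
      B i j ≠ 0 → A i k ≠ 0) := by
  set S : Set (Fin n) := {i | i = k ∨ ∃ l, i = z l}
  set P := (List.ofFn fun l : Fin m => u k (z l) (t l)).reverse.prod
  have hP : P.IsIdentityOff S := IsIdentityOff.list_prod fun M hM => by
    obtain ⟨l, rfl⟩ := List.mem_ofFn.1 (List.mem_reverse.1 hM)
    intro i j hij
    refine hu_delta k (z l) (hk l) (t l) (ht l) i j ?_
    simp only [S, Set.mem_ofPred_eq, not_or, not_exists] at hij
    exact hij.imp (fun h => ⟨h.1, h.2 l⟩) (fun h => ⟨h.1, h.2 l⟩)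
  have notMem : ∀ i, (i ≠ k ∧ ∀ l, i ≠ z l) → i ∉ S := by
    rintro i ⟨hik, hiz⟩ (h | ⟨l, h⟩)
    exacts [hik h, hiz l h]
  have rows : ∀ j, ∀ p ∈ S, p ≠ k → A p j = 0 := by
    rintro j p (h | ⟨l, rfl⟩) hpk
    exacts [absurd h hpk, (hA l).1 j]
  have cols : ∀ i, ∀ q ∈ S, q ≠ k → A i q = 0 := by
    rintro i q (h | ⟨l, rfl⟩) hqk
    exacts [absurd h hqk, (hA l).2 i]
  subst hB
  refine ⟨fun i j hi hj => ?_, fun i j hi hj hBij => ?_, fun i j hj hi hBij => ?_⟩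
  · rw [hP.conjTranspose.mul_apply_of_notMem_right _ _ (notMem j hj),
      hP.mul_apply_of_notMem_left _ (notMem i hi)]
  · rw [hP.conjTranspose.mul_apply_of_notMem_right _ _ (notMem j hj),
      hP.mul_apply_of_mem_left hi k (rows j)] at hBij
    exact right_ne_zero_of_mul hBij
  · rw [Matrix.mul_assoc, hP.mul_apply_of_notMem_left _ (notMem i hi),
      hP.conjTranspose.mul_apply_of_mem_right hj k (cols i)] at hBij
    exact left_ne_zero_of_mul hBij

/-- Let `A` be an `n×n` complex matrix having a zero cross at each of the
distinct positions `z 0, …, z (m-1)`, let `t l ∈ [0,1]`, and let `k` be an index not among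
the `z l`.  Set `B = u (k, z (m-1)) (t (m-1)) ⋯ u (k, z 0) (t 0) ⬝ A ⬝ (…)ᴴ`.
Then (1) entries with both indices outside `{k, z 0, …, z (m-1)}` are unchanged;
(2) if `i` is in that set and `j` is not, then `B i j ≠ 0` only if `A k j ≠ 0`;
(3) symmetrically in columns. -/
theorem zero_cross_conjugation_entries {n m : ℕ}
    (u : Fin n → Fin n → ℝ → Matrix (Fin n) (Fin n) ℂ)
    (hu_unitary : ∀ a b : Fin n, a ≠ b → ∀ t ∈ Set.Icc (0 : ℝ) 1,
      u a b t ∈ Matrix.unitaryGroup (Fin n) ℂ)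
    (hu_zero : ∀ a b : Fin n, a ≠ b → u a b 0 = 1)
    (hu_one : ∀ a b : Fin n, a ≠ b → u a b 1 = (Equiv.swap a b).permMatrix ℂ)
    (hu_delta : ∀ a b : Fin n, a ≠ b → ∀ t ∈ Set.Icc (0 : ℝ) 1, ∀ i j : Fin n,
      ((i ≠ a ∧ i ≠ b) ∨ (j ≠ a ∧ j ≠ b)) → u a b t i j = if i = j then 1 else 0)
    (A : Matrix (Fin n) (Fin n) ℂ)
    (z : Fin m → Fin n) (hz : Function.Injective z)
    (hA : ∀ l, HasZeroCross A (z l))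
    (t : Fin m → ℝ) (ht : ∀ l, t l ∈ Set.Icc (0 : ℝ) 1)
    (k : Fin n) (hk : ∀ l, k ≠ z l)
    (B : Matrix (Fin n) (Fin n) ℂ)
    (hB : B = (List.ofFn fun l : Fin m => u k (z l) (t l)).reverse.prod * A *
      ((List.ofFn fun l : Fin m => u k (z l) (t l)).reverse.prod)ᴴ) :
    (∀ i j : Fin n, (i ≠ k ∧ ∀ l, i ≠ z l) → (j ≠ k ∧ ∀ l, j ≠ z l) → B i j = A i j) ∧
    (∀ i j : Fin n, (i = k ∨ ∃ l, i = z l) → (j ≠ k ∧ ∀ l, j ≠ z l) →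
      B i j ≠ 0 → A k j ≠ 0) ∧
    (∀ i j : Fin n, (j = k ∨ ∃ l, j = z l) → (i ≠ k ∧ ∀ l, i ≠ z l) →
      B i j ≠ 0 → A i k ≠ 0) :=
  zero_cross_conjugation_entries_general u hu_delta A z hA t ht k hk B hB
end

section
/- Let A be an n×n complex matrix having a zero cross at each of the distinct positions z_1,…,z_m, let t_1,…,t_m ∈ [0,1], and let k ∈ {1,…,n} \ {z_1,…,z_m}. Set B = u_{(k z_m)}(t_m) ⋯ u_{(k z_1)}(t_1) · A · u_{(k z_1)}(t_1)* ⋯ u_{(k z_m)}(t_m)*. If at least one of t_1,…,t_m equals 1, then B has a zero cross at position k. -/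
open Matrix

/-!
Write `P = u_{(k z_m)}(t_m) ⋯ u_{(k z_1)}(t_1)`, so that `B = P A Pᴴ`. Each factor acts only on the
coordinates `k` and `z_l`, and the `z_l` are distinct and different from `k`; an induction on `m`
shows that row `k` of `P` is supported on `{k, z_1, …, z_m}` and that its diagonal entry is
`P k k = ∏ u_{(k z_l)}(t_l) k k`. This product vanishes because `u_{(k z_l)}(1)` is the swap matrix.
Hence row `k` of `P` lives on positions where `A` has a zero cross, which kills row `k` of `P A`
and column `k` of `A Pᴴ`.
-/

theorem Function.Injective.apply_zero_notMem_range_comp_succ {α : Type*} {m : ℕ}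
    {a : Fin (m + 1) → α} (ha : Function.Injective a) : a 0 ∉ Set.range (a ∘ Fin.succ) :=
  fun ⟨l, hl⟩ => Fin.succ_ne_zero l (ha hl)

theorem Equiv.Perm.permMatrix_apply_self_of_ne {ι R : Type*} [DecidableEq ι] [Zero R] [One R]
    {σ : Equiv.Perm ι} {i : ι} (hi : σ i ≠ i) : σ.permMatrix R i i = 0 := by
  simp [Equiv.Perm.permMatrix, PEquiv.toMatrix_apply, hi]

namespace Matrix

section ZeroRowColumn

variable {ι ι' κ o R : Type*} [Fintype ι] [Fintype ι'] [NonUnitalNonAssocSemiring R]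

theorem mul_mul_apply_eq_zero_of_row {P : Matrix κ ι R} {A : Matrix ι ι' R} {k : κ}
    (h : ∀ i, P k i = 0 ∨ ∀ j, A i j = 0) (C : Matrix ι' o R) (j : o) : (P * A * C) k j = 0 := by
  have hPA : ∀ j', (P * A) k j' = 0 := fun j' =>
    Finset.sum_eq_zero fun i _ => by rcases h i with h | h <;> simp [h]
  simp [mul_apply, hPA]

theorem mul_mul_conjTranspose_apply_eq_zero_of_row [StarRing R] {D : Matrix κ ι R}
    {A : Matrix ι' ι R} {k : κ} (h : ∀ j, D k j = 0 ∨ ∀ i, A i j = 0) (C : Matrix o ι' R)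
    (i : o) : (C * A * Dᴴ) i k = 0 := by
  refine Finset.sum_eq_zero fun j _ => ?_
  rcases h j with h | h
  · simp [h]
  · simp [mul_apply, h]

end ZeroRowColumn

variable {ι R : Type*} [Fintype ι] [DecidableEq ι]

def IsTwoLevel [Zero R] [One R] (U : Matrix ι ι R) (a b : ι) : Prop :=
  ∀ i j, (i ≠ a ∧ i ≠ b) ∨ (j ≠ a ∧ j ≠ b) → U i j = if i = j then 1 else 0

theorem IsTwoLevel.mul_apply_of_apply_eq_zero [Semiring R] {U Q : Matrix ι ι R} {k a : ι}
    (hU : IsTwoLevel U k a) {r : ι} (hQ : Q r a = 0) (i : ι) :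
    (Q * U) r i = Q r k * U k i + if i = k then 0 else Q r i := by
  have hterm : ∀ j, Q r j * U j i =
      (if k = j then Q r k * U k i else 0) + if i = j then (if i = k then 0 else Q r i) else 0 := by
    intro j
    by_cases hjk : j = k
    · subst hjk; by_cases hij : i = j <;> simp [hij]
    by_cases hja : j = a
    · subst hja; by_cases hij : i = j <;> simp [hij, hQ, Ne.symm hjk]
    rw [hU j i (Or.inl ⟨hjk, hja⟩)]
    by_cases hij : i = j
    · subst hij; simp [hjk, Ne.symm hjk]
    · simp [Ne.symm hjk, hij, Ne.symm hij]
  rw [mul_apply, Finset.sum_congr rfl fun j _ => hterm j]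
  simp only [Finset.sum_add_distrib, Finset.sum_ite_eq, Finset.mem_univ, if_true]

theorem prod_reverse_ofFn_apply_eq_zero_of_isTwoLevel [Semiring R] {m : ℕ} {k : ι}
    {a : Fin m → ι} (ha : Function.Injective a) (hka : ∀ l, a l ≠ k)
    {U : Fin m → Matrix ι ι R} (hU : ∀ l, IsTwoLevel (U l) k (a l))
    {i : ι} (hik : i ≠ k) (hia : i ∉ Set.range a) : (List.ofFn U).reverse.prod k i = 0 := by
  induction m generalizing i with
  | zero => simp [hik.symm]
  | succ m ih =>
    have ih' : ∀ {i}, i ≠ k → i ∉ Set.range (a ∘ Fin.succ) →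
        (List.ofFn fun l => U l.succ).reverse.prod k i = 0 := fun hik hia =>
      ih (ha.comp (Fin.succ_injective m)) (fun l => hka l.succ) (fun l => hU l.succ) hik hia
    have ha0 := ha.apply_zero_notMem_range_comp_succ
    rw [List.ofFn_succ, List.reverse_cons, List.prod_append, List.prod_singleton,
      (hU 0).mul_apply_of_apply_eq_zero (ih' (hka 0) ha0), if_neg hik,
      hU 0 k i (Or.inr ⟨hik, fun h => hia ⟨0, h.symm⟩⟩), if_neg hik.symm,
      ih' hik fun ⟨l, hl⟩ => hia ⟨l.succ, hl⟩, mul_zero, add_zero]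

theorem prod_reverse_ofFn_apply_self_of_isTwoLevel [CommSemiring R] {m : ℕ} {k : ι}
    {a : Fin m → ι} (ha : Function.Injective a) (hka : ∀ l, a l ≠ k)
    {U : Fin m → Matrix ι ι R} (hU : ∀ l, IsTwoLevel (U l) k (a l)) :
    (List.ofFn U).reverse.prod k k = ∏ l, U l k k := by
  induction m with
  | zero => simp
  | succ m ih =>
    rw [List.ofFn_succ, List.reverse_cons, List.prod_append, List.prod_singleton,
      (hU 0).mul_apply_of_apply_eq_zero, if_pos rfl, add_zero,
      ih (ha.comp (Fin.succ_injective m)) (fun l => hka l.succ) (fun l => hU l.succ),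
      Fin.prod_univ_succ, mul_comm]
    exact prod_reverse_ofFn_apply_eq_zero_of_isTwoLevel (ha.comp (Fin.succ_injective m))
      (fun l => hka l.succ) (fun l => hU l.succ) (hka 0) ha.apply_zero_notMem_range_comp_succ

end Matrix

theorem zero_cross_conjugation_creates_cross_general {n m : ℕ}
    (u : Fin n → Fin n → ℝ → Matrix (Fin n) (Fin n) ℂ)
    (hu_one : ∀ a b : Fin n, a ≠ b → u a b 1 = (Equiv.swap a b).permMatrix ℂ)
    (hu_delta : ∀ a b : Fin n, a ≠ b → ∀ t ∈ Set.Icc (0 : ℝ) 1, ∀ i j : Fin n,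
      ((i ≠ a ∧ i ≠ b) ∨ (j ≠ a ∧ j ≠ b)) → u a b t i j = if i = j then 1 else 0)
    (A : Matrix (Fin n) (Fin n) ℂ)
    (z : Fin m → Fin n) (hz : Function.Injective z)
    (hA : ∀ l, HasZeroCross A (z l))
    (t : Fin m → ℝ) (ht : ∀ l, t l ∈ Set.Icc (0 : ℝ) 1)
    (k : Fin n) (hk : ∀ l, k ≠ z l)
    (B : Matrix (Fin n) (Fin n) ℂ)
    (hB : B = (List.ofFn fun l : Fin m => u k (z l) (t l)).reverse.prod * A *
      ((List.ofFn fun l : Fin m => u k (z l) (t l)).reverse.prod)ᴴ)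
    (hone : ∃ l, t l = 1) :
    HasZeroCross B k := by
  set P := (List.ofFn fun l : Fin m => u k (z l) (t l)).reverse.prod
  have hzk : ∀ l, z l ≠ k := fun l => (hk l).symm
  have hU : ∀ l, IsTwoLevel (u k (z l) (t l)) k (z l) := fun l => hu_delta k (z l) (hk l) _ (ht l)
  have hkk : P k k = 0 := by
    obtain ⟨l, hl⟩ := hone
    refine (prod_reverse_ofFn_apply_self_of_isTwoLevel hz hzk hU).trans
      (Finset.prod_eq_zero (Finset.mem_univ l) ?_)
    rw [hl, hu_one k (z l) (hk l)]
    exact Equiv.Perm.permMatrix_apply_self_of_ne (by simpa using hzk l)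
  have hrow : ∀ i, P k i = 0 ∨ HasZeroCross A i := by
    intro i
    by_cases hiz : i ∈ Set.range z
    · obtain ⟨l, rfl⟩ := hiz
      exact Or.inr (hA l)
    by_cases hik : i = k
    · exact Or.inl (hik ▸ hkk)
    · exact Or.inl (prod_reverse_ofFn_apply_eq_zero_of_isTwoLevel hz hzk hU hik hiz)
  subst hB
  exact ⟨mul_mul_apply_eq_zero_of_row (fun i => (hrow i).imp_right And.left) _,
    mul_mul_conjTranspose_apply_eq_zero_of_row (fun j => (hrow j).imp_right And.right) _⟩

/-- Let `A` be an `n×n` complex matrix having a zero cross at each of the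
distinct positions `z 0, …, z (m-1)`, let `t l ∈ [0,1]`, and let `k` be an index not among
the `z l`.  Set `B = u (k, z (m-1)) (t (m-1)) ⋯ u (k, z 0) (t 0) ⬝ A ⬝ (…)ᴴ`.
If at least one of the `t l` equals `1`, then `B` has a zero cross at position `k`. -/
theorem zero_cross_conjugation_creates_cross {n m : ℕ}
    (u : Fin n → Fin n → ℝ → Matrix (Fin n) (Fin n) ℂ)
    (hu_unitary : ∀ a b : Fin n, a ≠ b → ∀ t ∈ Set.Icc (0 : ℝ) 1,
      u a b t ∈ Matrix.unitaryGroup (Fin n) ℂ)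
    (hu_zero : ∀ a b : Fin n, a ≠ b → u a b 0 = 1)
    (hu_one : ∀ a b : Fin n, a ≠ b → u a b 1 = (Equiv.swap a b).permMatrix ℂ)
    (hu_delta : ∀ a b : Fin n, a ≠ b → ∀ t ∈ Set.Icc (0 : ℝ) 1, ∀ i j : Fin n,
      ((i ≠ a ∧ i ≠ b) ∨ (j ≠ a ∧ j ≠ b)) → u a b t i j = if i = j then 1 else 0)
    (A : Matrix (Fin n) (Fin n) ℂ)
    (z : Fin m → Fin n) (hz : Function.Injective z)
    (hA : ∀ l, HasZeroCross A (z l))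
    (t : Fin m → ℝ) (ht : ∀ l, t l ∈ Set.Icc (0 : ℝ) 1)
    (k : Fin n) (hk : ∀ l, k ≠ z l)
    (B : Matrix (Fin n) (Fin n) ℂ)
    (hB : B = (List.ofFn fun l : Fin m => u k (z l) (t l)).reverse.prod * A *
      ((List.ofFn fun l : Fin m => u k (z l) (t l)).reverse.prod)ᴴ)
    (hone : ∃ l, t l = 1) :
    HasZeroCross B k :=
  zero_cross_conjugation_creates_cross_general u hu_one hu_delta A z hz hA t ht k hk B hB hone
end

section
/- Let A be an n×n complex matrix and Δ ∈ [0,1]^n be such that Δ_i > 0 only if A has a zero cross at position i. Let M ∈ ℕ and let k_1 < k_2 < ⋯ < k_N be positions with k_{j+1} − k_j ≥ M for all j and k_N ≤ n − M + 1, and suppose that for each j ∈ {1,…,N} there exists i ∈ {k_j,…,k_j+M−1} with Δ_i = 1. For each j set V_j = u_{(k_j, k_j+1)}(Δ_{k_j+1}) ⋯ u_{(k_j, k_j+M−1)}(Δ_{k_j+M−1}), and set A(N) = V_N ⋯ V_1 A V_1* ⋯ V_N*. Then A(N) has zero crosses at positions k_1, …, k_N. -/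
/-! Each factor `u_{(a b)}(t)` is the identity outside the block `{a, b}`, so `V_j` is the identity
outside the window `W_j = [k_j, k_j + M)`; as the windows are disjoint, row `k_j` of
`P = V_N ⋯ V_1` is row `k_j` of `V_j`. That row is supported on `k_j` and on the positions `p` of
the window with `Δ_p > 0` (a factor with `Δ_p = 0` is the identity), which are zero crosses of `A`.
If `Δ_p = 1` for some `p ≠ k_j`, the swap at `p` kills the diagonal entry at `k_j`, because the
factors before it live on `[k_j, p)` and those after it on `{k_j} ∪ (p, n)`. Finally, if every `r`
with `P_{c r} ≠ 0` is a zero cross of `A`, then `P A Pᴴ` has a zero cross at `c`. -/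

open Matrix

open Function

theorem List.exists_ofFn_eq_append_cons {α : Type*} {m : ℕ} (f : Fin m → α) (a : Fin m) :
    ∃ l₁ l₂, List.ofFn f = l₁ ++ f a :: l₂ ∧
      (∀ x ∈ l₁, ∃ b < a, f b = x) ∧ (∀ x ∈ l₂, ∃ b > a, f b = x) := by
  obtain ⟨s, t, hst⟩ := List.append_of_mem (List.mem_finRange a)
  have hsorted := List.pairwise_lt_finRange m
  rw [hst, List.pairwise_append, List.pairwise_cons] at hsorted
  refine ⟨s.map f, t.map f, by rw [List.ofFn_eq_map, hst, List.map_append, List.map_cons], ?_, ?_⟩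
  · simp only [List.mem_map]
    rintro _ ⟨b, hb, rfl⟩
    exact ⟨b, hsorted.2.2 b hb a List.mem_cons_self, rfl⟩
  · simp only [List.mem_map]
    rintro _ ⟨b, hb, rfl⟩
    exact ⟨b, hsorted.2.1.1 b hb, rfl⟩

namespace Matrix

section identityOutside

variable {n R : Type*} [Fintype n] [DecidableEq n] [Semiring R]

def identityOutside (T : Set n) : Submonoid (Matrix n n R) where
  carrier := {X | ∀ i j, (i ∉ T ∨ j ∉ T) → X i j = (1 : Matrix n n R) i j}
  one_mem' _ _ _ := rfl
  mul_mem' {X Y} hX hY i j := by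
    rintro (hi | hj)
    · calc (X * Y) i j = ((1 : Matrix n n R) * Y) i j := by
            simp only [mul_apply, fun t => hX i t (Or.inl hi)]
        _ = _ := by rw [Matrix.one_mul, hY i j (Or.inl hi)]
    · calc (X * Y) i j = (X * (1 : Matrix n n R)) i j := by
            simp only [mul_apply, fun t => hY t j (Or.inr hj)]
        _ = _ := by rw [Matrix.mul_one, hX i j (Or.inr hj)]

variable {S T : Set n} {X Y : Matrix n n R}

theorem identityOutside_mono (h : S ⊆ T) :
    identityOutside (R := R) S ≤ identityOutside T :=
  fun _ hX i j hij => hX i j (hij.imp (mt (@h i)) (mt (@h j)))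

theorem mul_apply_of_mem_identityOutside_left (hY : Y ∈ identityOutside S) {i : n} (hi : i ∉ S)
    (X : Matrix n n R) (j : n) : (Y * X) i j = X i j :=
  calc (Y * X) i j = ((1 : Matrix n n R) * X) i j := by
        simp only [mul_apply, fun t => hY i t (Or.inl hi)]
    _ = X i j := by rw [Matrix.one_mul]

theorem mul_apply_of_mem_identityOutside_compl (hX : X ∈ identityOutside T)
    (hY : Y ∈ identityOutside Tᶜ) {i : n} (hi : i ∈ T) (j : n) : (X * Y) i j = X i j :=
  calc (X * Y) i j = (X * (1 : Matrix n n R)) i j := by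
        simp only [mul_apply]
        refine Finset.sum_congr rfl fun t _ => ?_
        by_cases ht : t ∈ T
        · rw [hY t j (Or.inl (Set.notMem_compl_iff.mpr ht))]
        · rw [hX i t (Or.inr ht), one_apply_ne (ne_of_mem_of_not_mem hi ht), zero_mul, zero_mul]
    _ = X i j := by rw [Matrix.mul_one]

theorem list_prod_ofFn_mem_identityOutside {m : ℕ} {U : Fin m → Matrix n n R} {c : n}
    {p : Fin m → n} (hU : ∀ a, U a ∈ identityOutside {c, p a}) (hc : c ∈ S)
    (hpS : ∀ a, p a ∈ S) : (List.ofFn U).prod ∈ identityOutside S :=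
  Submonoid.list_prod_mem _ <| List.forall_mem_ofFn_iff.2 fun a =>
    identityOutside_mono (Set.insert_subset_iff.2 ⟨hc, Set.singleton_subset_iff.2 (hpS a)⟩) (hU a)

theorem list_prod_reverse_ofFn_apply {N : ℕ} {f : Fin N → Matrix n n R} {T : Fin N → Set n}
    (hT : Pairwise (Disjoint on T)) (hf : ∀ j, f j ∈ identityOutside (T j)) {j : Fin N} {c : n}
    (hc : c ∈ T j) (r : n) : (List.ofFn f).reverse.prod c r = f j c r := by
  obtain ⟨l₁, l₂, hsplit, h₁, h₂⟩ := List.exists_ofFn_eq_append_cons f j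
  have hrest : ∀ l : List (Matrix n n R), (∀ x ∈ l, ∃ i ≠ j, f i = x) →
      l.reverse.prod ∈ identityOutside (T j)ᶜ := by
    refine fun l hl => Submonoid.list_prod_mem _ fun x hx => ?_
    obtain ⟨i, hij, rfl⟩ := hl x (List.mem_reverse.mp hx)
    exact identityOutside_mono (hT hij).subset_compl_right (hf i)
  rw [hsplit, List.reverse_append, List.reverse_cons, List.prod_append, List.prod_append,
    List.prod_singleton, Matrix.mul_assoc,
    mul_apply_of_mem_identityOutside_left (hrest l₂ fun x hx => ?_) (Set.notMem_compl_iff.mpr hc),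
    mul_apply_of_mem_identityOutside_compl (hf j) (hrest l₁ fun x hx => ?_) hc]
  · obtain ⟨i, hi, rfl⟩ := h₁ x hx
    exact ⟨i, hi.ne, rfl⟩
  · obtain ⟨i, hi, rfl⟩ := h₂ x hx
    exact ⟨i, hi.ne', rfl⟩

end identityOutside

section window

variable {n R : Type*} [Fintype n] [LinearOrder n] [Semiring R] {c : n}

theorem mul_swap_mul_apply_self_eq_zero {p : n} (hcp : c < p) {X Y : Matrix n n R}
    (hX : X ∈ identityOutside (Set.Ico c p)) (hY : Y ∈ identityOutside (insert c (Set.Ioi p))) :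
    (X * (Equiv.swap c p).permMatrix R * Y) c c = 0 := by
  rw [PEquiv.mul_toMatrix_toPEquiv, Equiv.symm_swap, mul_apply]
  refine Finset.sum_eq_zero fun t _ => ?_
  rw [submatrix_apply, id]
  by_cases ht : t ∈ insert c (Set.Ioi p)
  · have hswap : Equiv.swap c p t ∉ Set.Ico c p := by
      rcases ht with rfl | ht
      · simp
      · rw [Equiv.swap_apply_of_ne_of_ne (hcp.trans ht).ne' (ne_of_gt ht)]
        exact fun h => h.2.not_gt ht
    rw [hX c _ (Or.inr hswap), one_apply_ne (ne_of_mem_of_not_mem (Set.left_mem_Ico.2 hcp) hswap),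
      zero_mul]
  · rw [hY t c (Or.inl ht), one_apply_ne (ne_of_mem_of_not_mem (Set.mem_insert c _) ht).symm,
      mul_zero]

variable {m : ℕ} {p : Fin m → n} {U : Fin m → Matrix n n R}

theorem list_prod_ofFn_apply_self_eq_zero (hp : StrictMono p) (hcp : ∀ a, c < p a)
    (hU : ∀ a, U a ∈ identityOutside {c, p a}) {a : Fin m}
    (ha : U a = (Equiv.swap c (p a)).permMatrix R) : (List.ofFn U).prod c c = 0 := by
  obtain ⟨l₁, l₂, hsplit, h₁, h₂⟩ := List.exists_ofFn_eq_append_cons U a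
  rw [hsplit, List.prod_append, List.prod_cons, ← Matrix.mul_assoc, ha]
  refine mul_swap_mul_apply_self_eq_zero (hcp a) (Submonoid.list_prod_mem _ fun x hx => ?_)
    (Submonoid.list_prod_mem _ fun x hx => ?_)
  · obtain ⟨b, hb, rfl⟩ := h₁ x hx
    refine identityOutside_mono ?_ (hU b)
    rw [Set.insert_subset_iff, Set.singleton_subset_iff]
    exact ⟨Set.left_mem_Ico.2 (hcp a), (hcp b).le, hp hb⟩
  · obtain ⟨b, hb, rfl⟩ := h₂ x hx
    exact identityOutside_mono
      (Set.insert_subset_insert (Set.singleton_subset_iff.2 (hp hb))) (hU b)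

theorem mem_of_list_prod_ofFn_apply_ne_zero (hp : StrictMono p) (hcp : ∀ a, c < p a)
    (hU : ∀ a, U a ∈ identityOutside {c, p a}) {C : Set n} (hUC : ∀ a, p a ∉ C → U a = 1)
    (hswap : c ∈ C ∨ ∃ a, U a = (Equiv.swap c (p a)).permMatrix R) {r : n}
    (hr : (List.ofFn U).prod c r ≠ 0) : r ∈ C := by
  have hprod : (List.ofFn U).prod ∈ identityOutside (insert c C) :=
    Submonoid.list_prod_mem _ <| List.forall_mem_ofFn_iff.2 fun a => by
      by_cases ha : p a ∈ C
      · exact identityOutside_mono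
          (Set.insert_subset_insert (Set.singleton_subset_iff.2 ha)) (hU a)
      · rw [hUC a ha]
        exact one_mem _
  by_contra hrC
  obtain rfl : r = c := by
    by_contra hrc
    exact hr (by rw [hprod c r (Or.inr (by simp [hrc, hrC])), one_apply_ne (Ne.symm hrc)])
  rcases hswap with hc | ⟨a, ha⟩
  · exact hrC hc
  · exact hr (list_prod_ofFn_apply_self_eq_zero hp hcp hU ha)

end window

end Matrix

theorem pairwise_disjoint_Ico_of_gap {N M : ℕ} {k : Fin N → ℕ} (hmono : Monotone k)
    (hgap : ∀ (j : ℕ) (hj : j + 1 < N), k ⟨j, Nat.lt_of_succ_lt hj⟩ + M ≤ k ⟨j + 1, hj⟩) :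
    Pairwise (Disjoint on fun j => Set.Ico (k j) (k j + M)) := by
  have hsep : ∀ i j : Fin N, i < j → k i + M ≤ k j := fun i j hij =>
    (hgap i (by omega)).trans (hmono (Fin.le_def.2 (by simp only; omega)))
  intro i j hij
  rcases hij.lt_or_gt with h | h
  · exact Set.Ico_disjoint_Ico.2 (by have := hsep i j h; omega)
  · exact Set.Ico_disjoint_Ico.2 (by have := hsep j i h; omega)

theorem HasZeroCross.mul_mul_conjTranspose {n : ℕ} {A P : Matrix (Fin n) (Fin n) ℂ} {c : Fin n}
    (h : ∀ r, P c r ≠ 0 → HasZeroCross A r) : HasZeroCross (P * A * Pᴴ) c := by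
  have hcol : ∀ i s, P c s ≠ 0 → (P * A) i s = 0 := fun i s hs => by
    rw [mul_apply]
    exact Finset.sum_eq_zero fun r _ => by rw [(h s hs).2 r, mul_zero]
  have hrow : ∀ s, (P * A) c s = 0 := fun s => by
    rw [mul_apply]
    refine Finset.sum_eq_zero fun r _ => ?_
    by_cases hr : P c r = 0
    · rw [hr, zero_mul]
    · rw [(h r hr).1 s, mul_zero]
  constructor <;> intro i <;> rw [mul_apply] <;> refine Finset.sum_eq_zero fun s _ => ?_
  · rw [hrow s, zero_mul]
  · rw [conjTranspose_apply]
    by_cases hs : P c s = 0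
    · rw [hs, star_zero, mul_zero]
    · rw [hcol i s hs, zero_mul]

section pathFactors

variable {n : ℕ} {u : Fin n → Fin n → ℝ → Matrix (Fin n) (Fin n) ℂ} {Δ : Fin n → ℝ}

theorem hasZeroCross_of_window_prod_apply_ne_zero {A : Matrix (Fin n) (Fin n) ℂ}
    (hu_zero : ∀ a b : Fin n, a ≠ b → u a b 0 = 1)
    (hu_one : ∀ a b : Fin n, a ≠ b → u a b 1 = (Equiv.swap a b).permMatrix ℂ)
    (hfac : ∀ a b : Fin n, a ≠ b → ∀ t ∈ Set.Icc (0 : ℝ) 1, u a b t ∈ identityOutside {a, b})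
    (hΔ01 : ∀ i, Δ i ∈ Set.Icc (0 : ℝ) 1) (hΔcross : ∀ i, 0 < Δ i → HasZeroCross A i)
    {c : Fin n} {m : ℕ} {p : Fin m → Fin n} (hp : ∀ a, (p a : ℕ) = c + 1 + a)
    (hex : ∃ i : Fin n, c ≤ i ∧ (i : ℕ) < c + m + 1 ∧ Δ i = 1) {r : Fin n}
    (hr : (List.ofFn fun a => u c (p a) (Δ (p a))).prod c r ≠ 0) : HasZeroCross A r := by
  have hcp : ∀ a, c < p a := fun a => Fin.lt_def.2 (by have := hp a; omega)
  have hpmono : StrictMono p := fun a b hab => Fin.lt_def.2 (by rw [hp, hp]; omega)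
  refine mem_of_list_prod_ofFn_apply_ne_zero (C := {r | HasZeroCross A r}) hpmono hcp
    (fun a => hfac _ _ (hcp a).ne _ (hΔ01 _)) (fun a ha => ?_) ?_ hr
  · have hΔa : Δ (p a) = 0 := le_antisymm (not_lt.1 fun h => ha (hΔcross _ h)) (hΔ01 _).1
    show u c (p a) (Δ (p a)) = 1
    rw [hΔa, hu_zero _ _ (hcp a).ne]
  · obtain ⟨i, hci, hic, hΔi⟩ := hex
    rcases hci.eq_or_lt with rfl | hlt
    · exact Or.inl (hΔcross _ (hΔi ▸ one_pos))
    · have hi : p ⟨i - c - 1, by omega⟩ = i := Fin.ext (by rw [hp]; simp only; omega)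
      refine Or.inr ⟨⟨i - c - 1, by omega⟩, ?_⟩
      show u c _ (Δ _) = _
      rw [hi, hΔi, hu_one _ _ hlt.ne]

end pathFactors

/-- Let `A` be an `n×n` complex matrix and `Δ ∈ [0,1]^n` with `Δ i > 0` only
if `A` has a zero cross at position `i`.  Let `k 0 < k 1 < ⋯ < k (N-1)` be positions with
consecutive gaps at least `M` and each window `{k j, …, k j + M - 1}` inside `{1,…,n}`
(`k_N ≤ n − M + 1`), and suppose each window contains an index `i` with `Δ i = 1`.
With `V j = u (k j, k j + 1) (Δ (k j + 1)) ⋯ u (k j, k j + M - 1) (Δ (k j + M - 1))` and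
`B = V (N-1) ⋯ V 0 ⬝ A ⬝ (V 0)ᴴ ⋯ (V (N-1))ᴴ`, the matrix `B` has zero crosses at the
positions `k 0, …, k (N-1)`. -/
theorem zero_cross_block_many {n N : ℕ}
    (u : Fin n → Fin n → ℝ → Matrix (Fin n) (Fin n) ℂ)
    (hu_zero : ∀ a b : Fin n, a ≠ b → u a b 0 = 1)
    (hu_one : ∀ a b : Fin n, a ≠ b → u a b 1 = (Equiv.swap a b).permMatrix ℂ)
    (hu_delta : ∀ a b : Fin n, a ≠ b → ∀ t ∈ Set.Icc (0 : ℝ) 1, ∀ i j : Fin n,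
      ((i ≠ a ∧ i ≠ b) ∨ (j ≠ a ∧ j ≠ b)) → u a b t i j = if i = j then 1 else 0)
    (A : Matrix (Fin n) (Fin n) ℂ)
    (Δ : Fin n → ℝ) (hΔ01 : ∀ i, Δ i ∈ Set.Icc (0 : ℝ) 1)
    (hΔcross : ∀ i, 0 < Δ i → HasZeroCross A i)
    (M : ℕ) (k : Fin N → Fin n)
    (hmono : StrictMono k)
    (hgap : ∀ (j : ℕ) (hj : j + 1 < N),
      (k ⟨j, Nat.lt_of_succ_lt hj⟩ : ℕ) + M ≤ (k ⟨j + 1, hj⟩ : ℕ))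
    (hwin : ∀ j : Fin N, (k j : ℕ) + M ≤ n)
    (hex : ∀ j : Fin N, ∃ i : Fin n,
      (k j : ℕ) ≤ (i : ℕ) ∧ (i : ℕ) < (k j : ℕ) + M ∧ Δ i = 1)
    (V : Fin N → Matrix (Fin n) (Fin n) ℂ)
    (hV : ∀ j : Fin N, V j = (List.ofFn fun a : Fin (M - 1) =>
      u (k j) ⟨(k j : ℕ) + 1 + (a : ℕ), by have := a.isLt; have := hwin j; omega⟩
        (Δ ⟨(k j : ℕ) + 1 + (a : ℕ), by have := a.isLt; have := hwin j; omega⟩)).prod)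
    (B : Matrix (Fin n) (Fin n) ℂ)
    (hB : B = (List.ofFn V).reverse.prod * A * ((List.ofFn V).reverse.prod)ᴴ) :
    ∀ j : Fin N, HasZeroCross B (k j) := by
  have hfac : ∀ a b : Fin n, a ≠ b → ∀ t ∈ Set.Icc (0 : ℝ) 1, u a b t ∈ identityOutside {a, b} :=
    fun a b hab t ht i j hij => hu_delta a b hab t ht i j (by simpa using hij)
  let W : Fin N → Set (Fin n) := fun j => Fin.val ⁻¹' Set.Ico (k j : ℕ) (k j + M)
  have hW : Pairwise (Disjoint on W) := fun i j hij =>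
    (pairwise_disjoint_Ico_of_gap (Fin.val_strictMono.comp hmono).monotone hgap hij).preimage _
  have hVW : ∀ j, V j ∈ identityOutside (W j) := fun j => by
    rw [hV j]
    refine list_prod_ofFn_mem_identityOutside (fun a => hfac _ _ ?_ _ (hΔ01 _)) ?_ fun a => ?_
    · exact Fin.ne_of_val_ne (by simp only; omega)
    · obtain ⟨i, hi⟩ := hex j
      simp only [W, Set.mem_preimage, Set.mem_Ico]
      omega
    · have := a.isLt
      simp only [W, Set.mem_preimage, Set.mem_Ico]
      omega
  intro j
  obtain ⟨i, hki, hik, hΔi⟩ := hex j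
  rw [hB]
  refine HasZeroCross.mul_mul_conjTranspose fun r hr => ?_
  rw [list_prod_reverse_ofFn_apply hW hVW (j := j)
    (by simp only [W, Set.mem_preimage, Set.mem_Ico]; omega), hV j] at hr
  exact hasZeroCross_of_window_prod_apply_ne_zero hu_zero hu_one hfac hΔ01 hΔcross (fun _ => rfl)
    ⟨i, hki, by omega, hΔi⟩ hr
end

section
/- Let A be an n×n complex matrix with zero crosses at the distinct positions z_1, …, z_m. Then there exists a continuous map V : [0,1] → M_n(ℂ) such that V(θ) is unitary for every θ ∈ [0,1], V(0) is the identity matrix, V(1) A V(1)* has zero crosses at positions 1, …, m, and for every r ∈ ℕ such that A has diagonal radius at most r and every θ ∈ [0,1], the matrix V(θ) A V(θ)* has diagonal radius at most r + 2. -/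
open Matrix

/-- `A` has diagonal radius at most `r`: `A i j = 0` whenever `|i - j| ≥ r`. -/
def DiagRadiusLE {n : ℕ} (A : Matrix (Fin n) (Fin n) ℂ) (r : ℕ) : Prop :=
  ∀ i j : Fin n, (r : ℤ) ≤ |(i : ℤ) - (j : ℤ)| → A i j = 0

/-!
Givens rotations in the plane of a zero cross `p` and its neighbour `p - 1` carry the cross one
step down. Because row and column `p` vanish, every conjugate along such a rotation is the
current matrix with its rows and columns rescaled and the index `p` relabelled `p - 1`, so its
diagonal radius exceeds the current one by at most one.

The crosses are moved, in increasing order, one after the other to the first position not yet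
occupied by a cross. While a cross travels, the matrix with that cross deleted does not change,
so the radius stays at most `r + 1` between rotations; once the cross has arrived, everything
before it is a cross too and the radius is back to `r`.
-/

section

variable {n : ℕ} {A : Matrix (Fin n) (Fin n) ℂ}

theorem DiagRadiusLE.mono {r r' : ℕ} (h : DiagRadiusLE A r) (hr : r ≤ r') :
    DiagRadiusLE A r' :=
  fun i j hij => h i j (le_trans (by exact_mod_cast hr) hij)

theorem diagRadiusLE_size (A : Matrix (Fin n) (Fin n) ℂ) : DiagRadiusLE A n := by
  intro i j hij
  rw [le_abs] at hij
  omega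

noncomputable def givens (p q : Fin n) (θ : ℝ) : Matrix (Fin n) (Fin n) ℂ :=
  Matrix.of fun i j =>
    if i = q then (if j = q then (Real.cos θ : ℂ) else if j = p then -(Real.sin θ : ℂ) else 0)
    else if i = p then
      (if j = q then (Real.sin θ : ℂ) else if j = p then (Real.cos θ : ℂ) else 0)
    else if i = j then 1 else 0

variable {p q : Fin n}

theorem continuous_givens : Continuous (givens p q) := by
  refine continuous_matrix fun i j => ?_
  simp only [givens, of_apply]
  split_ifs <;> fun_prop

theorem givens_zero : givens p q 0 = 1 := by
  ext i j
  simp only [givens, of_apply, Real.cos_zero, Real.sin_zero, one_apply]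
  split_ifs <;> simp_all

theorem givens_conjTranspose (θ : ℝ) : (givens p q θ)ᴴ = givens p q (-θ) := by
  ext i j
  simp only [conjTranspose_apply, givens, of_apply, Real.cos_neg, Real.sin_neg]
  split_ifs <;> subst_vars <;> simp_all [-Complex.ofReal_cos, -Complex.ofReal_sin]

theorem givens_mul_apply (hqp : q ≠ p) (θ : ℝ) (M : Matrix (Fin n) (Fin n) ℂ) (i j : Fin n) :
    (givens p q θ * M) i j =
      if i = q then Real.cos θ * M q j - Real.sin θ * M p j
      else if i = p then Real.sin θ * M q j + Real.cos θ * M p j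
      else M i j := by
  simp only [mul_apply, givens, of_apply]
  split_ifs <;>
    simp [ite_mul, Finset.sum_ite, Finset.filter_eq', Finset.filter_ne', Ne.symm hqp]; ring

theorem mul_givens_apply (hqp : q ≠ p) (θ : ℝ) (M : Matrix (Fin n) (Fin n) ℂ) (i j : Fin n) :
    (M * givens p q θ) i j =
      if j = q then M i q * Real.cos θ + M i p * Real.sin θ
      else if j = p then -(M i q * Real.sin θ) + M i p * Real.cos θ
      else M i j := by
  have h : (M * givens p q θ) i j = star ((givens p q (-θ) * Mᴴ) j i) := by
    rw [← conjTranspose_apply, conjTranspose_mul, conjTranspose_conjTranspose,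
      givens_conjTranspose, neg_neg]
  rw [h, givens_mul_apply hqp]
  split_ifs <;> simp [-Complex.ofReal_cos, -Complex.ofReal_sin] <;> ring

theorem givens_mem_unitaryGroup (hqp : q ≠ p) (θ : ℝ) :
    givens p q θ ∈ unitaryGroup (Fin n) ℂ := by
  rw [mem_unitaryGroup_iff, star_eq_conjTranspose, givens_conjTranspose]
  ext i j
  rw [givens_mul_apply hqp]
  simp only [givens, of_apply, Real.cos_neg, Real.sin_neg, one_apply]
  split_ifs <;> simp_all <;>
    first | ring1 | linear_combination Complex.cos_sq_add_sin_sq (θ : ℂ)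

noncomputable def givensScale (p q : Fin n) (θ : ℝ) (i : Fin n) : ℂ :=
  if i = q then Real.cos θ else if i = p then Real.sin θ else 1

theorem givens_conj_apply (hqp : q ≠ p) (hA : HasZeroCross A p) (θ : ℝ) (i j : Fin n) :
    (givens p q θ * A * (givens p q θ)ᴴ) i j =
      givensScale p q θ i * givensScale p q θ j *
        A (Function.update id p q i) (Function.update id p q j) := by
  rw [givens_conjTranspose, mul_givens_apply hqp, givens_mul_apply hqp, givens_mul_apply hqp,
    givens_mul_apply hqp]
  simp only [givensScale, Function.update_apply, id, hA.1, hA.2, Real.cos_neg, Real.sin_neg]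
  split_ifs <;> simp_all <;> ring

theorem diagRadiusLE_givens_conj (hq : (q : ℕ) + 1 = p) (hA : HasZeroCross A p) {s : ℕ}
    (h : DiagRadiusLE A s) (θ : ℝ) :
    DiagRadiusLE (givens p q θ * A * (givens p q θ)ᴴ) (s + 1) := by
  have hqp : q ≠ p := fun h => by omega
  intro i j hij
  rw [givens_conj_apply hqp hA, h, mul_zero]
  simp only [Function.update_apply, id]
  rw [le_abs] at hij ⊢
  split_ifs <;> subst_vars <;> omega

theorem givens_pi_div_two_conj (hqp : q ≠ p) (hA : HasZeroCross A p) :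
    givens p q (Real.pi / 2) * A * (givens p q (Real.pi / 2))ᴴ =
      A.submatrix (Equiv.swap q p) (Equiv.swap q p) := by
  ext i j
  rw [givens_conj_apply hqp hA]
  simp only [givensScale, Function.update_apply, id, submatrix_apply, Equiv.swap_apply_def,
    Real.cos_pi_div_two, Real.sin_pi_div_two]
  split_ifs <;> simp_all [hA.1, hA.2]

def bandConjugators (A : Matrix (Fin n) (Fin n) ℂ) (s : ℕ) : Set (Matrix (Fin n) (Fin n) ℂ) :=
  {W | W ∈ unitaryGroup (Fin n) ℂ ∧ DiagRadiusLE (W * A * Wᴴ) s}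

def JoinedWithinRadius (s : ℕ) (A B : Matrix (Fin n) (Fin n) ℂ) : Prop :=
  ∃ W, JoinedIn (bandConjugators A s) 1 W ∧ W * A * Wᴴ = B

theorem JoinedWithinRadius.refl {s : ℕ} (h : DiagRadiusLE A s) : JoinedWithinRadius s A A :=
  ⟨1, .refl ⟨one_mem _, by simpa using h⟩, by simp⟩

theorem JoinedWithinRadius.trans {s : ℕ} {B C : Matrix (Fin n) (Fin n) ℂ}
    (hAB : JoinedWithinRadius s A B) (hBC : JoinedWithinRadius s B C) :
    JoinedWithinRadius s A C := by
  obtain ⟨W, hW, rfl⟩ := hAB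
  obtain ⟨W', hW', rfl⟩ := hBC
  have conj_mul (X : Matrix (Fin n) (Fin n) ℂ) :
      X * W * A * (X * W)ᴴ = X * (W * A * Wᴴ) * Xᴴ := by
    simp only [conjTranspose_mul, Matrix.mul_assoc]
  refine ⟨W' * W, hW.trans ?_, conj_mul W'⟩
  have hmap := hW'.map (f := (· * W)) (by fun_prop)
  rw [one_mul] at hmap
  refine hmap.mono ?_
  rintro _ ⟨X, ⟨hXu, hXr⟩, rfl⟩
  exact ⟨mul_mem hXu hW.target_mem.1, by rwa [conj_mul]⟩

theorem joinedWithinRadius_swap (hq : (q : ℕ) + 1 = p) (hA : HasZeroCross A p) {s : ℕ}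
    (h : DiagRadiusLE A s) :
    JoinedWithinRadius (s + 1) A (A.submatrix (Equiv.swap q p) (Equiv.swap q p)) := by
  have hqp : q ≠ p := fun h => by omega
  refine ⟨_, JoinedIn.ofLine (f := fun θ => givens p q (Real.pi / 2 * θ)) ?_ ?_ ?_ ?_,
    givens_pi_div_two_conj hqp hA⟩
  · exact (continuous_givens.comp (by fun_prop)).continuousOn
  · simp [givens_zero]
  · simp
  · rintro _ ⟨θ, -, rfl⟩
    exact ⟨givens_mem_unitaryGroup hqp _, diagRadiusLE_givens_conj hq hA h _⟩

theorem HasZeroCross.submatrix {σ : Equiv.Perm (Fin n)} {k : Fin n} (h : HasZeroCross A (σ k)) :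
    HasZeroCross (A.submatrix σ σ) k :=
  ⟨fun _ => h.1 _, fun _ => h.2 _⟩

/-- Position of index `i` once index `p` has been deleted (meaningful for `i ≠ p`). -/
def shiftDownAbove (p i : ℕ) : ℤ :=
  if i ≤ p then i else i - 1

def DiagRadiusLEWithout (A : Matrix (Fin n) (Fin n) ℂ) (p r : ℕ) : Prop :=
  ∀ i j : Fin n, (r : ℤ) ≤ |shiftDownAbove p i - shiftDownAbove p j| → A i j = 0

theorem DiagRadiusLE.without {r : ℕ} (h : DiagRadiusLE A r) (p : ℕ) :
    DiagRadiusLEWithout A p r := by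
  intro i j hij
  refine h i j ?_
  simp only [shiftDownAbove, le_abs] at hij ⊢
  split_ifs at hij <;> omega

namespace DiagRadiusLEWithout

variable {p r : ℕ}

theorem diagRadiusLE_succ (h : DiagRadiusLEWithout A p r) : DiagRadiusLE A (r + 1) := by
  intro i j hij
  refine h i j ?_
  simp only [shiftDownAbove, le_abs] at hij ⊢
  split_ifs <;> omega

theorem diagRadiusLE (h : DiagRadiusLEWithout A p r)
    (hc : ∀ k : Fin n, (k : ℕ) ≤ p → HasZeroCross A k) : DiagRadiusLE A r := by
  intro i j hij
  by_cases hi : (i : ℕ) ≤ p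
  · exact (hc i hi).1 j
  by_cases hj : (j : ℕ) ≤ p
  · exact (hc j hj).2 i
  refine h i j ?_
  simp only [shiftDownAbove, if_neg hi, if_neg hj]
  rwa [sub_sub_sub_cancel_right]

/-- Deleting the zero cross `p` of `A` or the zero cross `q` of its swap leaves the same matrix. -/
theorem swap {p q : Fin n} (hq : (q : ℕ) + 1 = p) (hA : HasZeroCross A p)
    (h : DiagRadiusLEWithout A p r) :
    DiagRadiusLEWithout (A.submatrix (Equiv.swap q p) (Equiv.swap q p)) q r := by
  have hshift : ∀ i : Fin n, i ≠ q →
      shiftDownAbove q i = shiftDownAbove p (Equiv.swap q p i) := by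
    intro i hi
    simp only [shiftDownAbove, Equiv.swap_apply_def, if_neg hi]
    split_ifs <;> subst_vars <;> omega
  intro i j hij
  by_cases hi : i = q
  · simp [hi, hA.1]
  by_cases hj : j = q
  · simp [hj, hA.2]
  exact h _ _ (by rwa [← hshift i hi, ← hshift j hj])

end DiagRadiusLEWithout

theorem exists_joinedWithinRadius_moveCrossDown {r d : ℕ} {t p : Fin n}
    (hp : (p : ℕ) = t + d) (hA : HasZeroCross A p) (h : DiagRadiusLEWithout A p r) :
    ∃ B, JoinedWithinRadius (r + 2) A B ∧ HasZeroCross B t ∧ DiagRadiusLEWithout B t r ∧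
      ∀ k : Fin n, ((k : ℕ) < t ∨ (p : ℕ) < k) → HasZeroCross A k → HasZeroCross B k := by
  induction d generalizing A p with
  | zero =>
    obtain rfl : p = t := Fin.ext hp
    exact ⟨A, .refl (h.diagRadiusLE_succ.mono (by omega)), hA, h, fun _ _ hk => hk⟩
  | succ d ih =>
    set q : Fin n := ⟨p - 1, by omega⟩
    have hq : (q : ℕ) + 1 = p := by simp only [q]; omega
    obtain ⟨B, hAB, hBt, hB, hcross⟩ :=
      ih (p := q) (by omega) (HasZeroCross.submatrix (by rwa [Equiv.swap_apply_left]))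
        (h.swap hq hA)
    refine ⟨B, (joinedWithinRadius_swap hq hA h.diagRadiusLE_succ).trans hAB, hBt, hB,
      fun k hk hAk => hcross k (by omega) (HasZeroCross.submatrix ?_)⟩
    rwa [Equiv.swap_apply_of_ne_of_ne (fun h => by subst h; omega) (fun h => by subst h; omega)]

theorem exists_joinedWithinRadius_crossesBelow {r m t : ℕ} {S : Finset (Fin n)}
    (hS : S.card = m) (hSA : ∀ k ∈ S, t ≤ k ∧ HasZeroCross A k)
    (hlow : ∀ k : Fin n, (k : ℕ) < t → HasZeroCross A k) (h : DiagRadiusLE A r) :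
    ∃ B, JoinedWithinRadius (r + 2) A B ∧ ∀ k : Fin n, (k : ℕ) < t + m → HasZeroCross B k := by
  induction m generalizing t A S with
  | zero =>
    exact ⟨A, .refl (h.mono (by omega)), hlow⟩
  | succ m ih =>
    have hne : S.Nonempty := Finset.card_pos.mp (by omega)
    set p := S.min' hne
    have htp : t ≤ p := (hSA p (S.min'_mem hne)).1
    obtain ⟨B, hAB, hBt, hB, hcross⟩ := exists_joinedWithinRadius_moveCrossDown (d := p - t)
      (t := ⟨t, by omega⟩) (by simp; omega) (hSA p (S.min'_mem hne)).2 (h.without p)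
    have hBlow : ∀ k : Fin n, (k : ℕ) < t + 1 → HasZeroCross B k := by
      intro k hk
      rcases Nat.lt_succ_iff_lt_or_eq.mp hk with hk | hk
      · exact hcross k (.inl hk) (hlow k hk)
      · rwa [show k = ⟨t, by omega⟩ from Fin.ext hk]
    have habove : ∀ k ∈ S.erase p, t + 1 ≤ k ∧ HasZeroCross B k := by
      intro k hk
      have hpk : (p : ℕ) < k := S.min'_lt_of_mem_erase_min' hne hk
      exact ⟨by omega, hcross k (.inr hpk) (hSA k (Finset.mem_of_mem_erase hk)).2⟩
    obtain ⟨C, hBC, hC⟩ := ih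
      (by rw [Finset.card_erase_of_mem (S.min'_mem hne)]; omega) habove hBlow
      (hB.diagRadiusLE fun k hk => hBlow k (by simp at hk; omega))
    exact ⟨C, hAB.trans hBC, fun k hk => hC k (by omega)⟩

end

/-- Let `A` be an `n×n` complex matrix with zero crosses at the distinct
positions `z 0, …, z (m-1)`.  Then there is a continuous path `V` on `[0,1]` of unitary
matrices with `V 0 = 1`, such that `V 1 ⬝ A ⬝ (V 1)ᴴ` has zero crosses at the first `m`
positions (positions `1, …, m` in 1-based indexing), and for every `r` with
`A` of diagonal radius at most `r` and every `θ ∈ [0,1]`, the matrix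
`V θ ⬝ A ⬝ (V θ)ᴴ` has diagonal radius at most `r + 2`. -/
theorem condense_zero_crosses {n m : ℕ}
    (A : Matrix (Fin n) (Fin n) ℂ)
    (z : Fin m → Fin n) (hz : Function.Injective z)
    (hA : ∀ l, HasZeroCross A (z l)) :
    ∃ V : ℝ → Matrix (Fin n) (Fin n) ℂ,
      ContinuousOn V (Set.Icc 0 1) ∧
      (∀ θ ∈ Set.Icc (0 : ℝ) 1, V θ ∈ Matrix.unitaryGroup (Fin n) ℂ) ∧
      V 0 = 1 ∧
      (∀ i : Fin n, (i : ℕ) < m → HasZeroCross (V 1 * A * (V 1)ᴴ) i) ∧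
      (∀ r : ℕ, DiagRadiusLE A r → ∀ θ ∈ Set.Icc (0 : ℝ) 1,
        DiagRadiusLE (V θ * A * (V θ)ᴴ) (r + 2)) := by
  classical
  -- The path is built for the least radius of `A`, hence serves every admissible `r`.
  have hrad : ∃ r, DiagRadiusLE A r := ⟨n, diagRadiusLE_size A⟩
  obtain ⟨B, ⟨W, hW, rfl⟩, hB⟩ := exists_joinedWithinRadius_crossesBelow (r := Nat.find hrad)
    (m := m) (t := 0) (S := Finset.univ.image z) (by simp [Finset.card_image_of_injective _ hz])
    (by simp [hA]) (by simp) (Nat.find_spec hrad)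
  set γ := hW.somePath
  have hγ : ∀ θ ∈ Set.Icc (0 : ℝ) 1, γ.extend θ ∈ bandConjugators A (Nat.find hrad + 2) :=
    fun θ hθ => by rw [γ.extend_apply hθ]; exact hW.somePath_mem _
  refine ⟨γ.extend, γ.continuous_extend.continuousOn, fun θ hθ => (hγ θ hθ).1, γ.extend_zero,
    fun i hi => by rw [γ.extend_one]; exact hB i (by omega), fun r hr θ hθ => ?_⟩
  exact (hγ θ hθ).2.mono (by have := Nat.find_min' hrad hr; omega)
end

section
/- Let A be an n×n complex matrix with a zero cross at position j, and let P = U[(1 2 ⋯ j)] be the permutation matrix of the cycle (1 2 ⋯ j) on {1,…,n} (fixing j+1,…,n). If A has diagonal radius at most r, then P A P* has diagonal radius at most r. -/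
open Matrix

/-- The cycle `(a a+1 ⋯ b)` on the 1-based index set `{1,…,n}` (fixing the other
indices), as a function on 1-based indices. -/
def cycFun (a b s : ℕ) : ℕ :=
  if a ≤ s ∧ s < b then s + 1 else if s = b then a else s

/-- The permutation matrix `U[(a a+1 ⋯ b)]` of the cycle `(a a+1 ⋯ b)` on `{1,…,n}`
(1-based positions `a, b`), with the convention `U e_t = e_{σ t}`. -/
def cycMat (n a b : ℕ) : Matrix (Fin n) (Fin n) ℂ :=
  Matrix.of fun s t => if (s : ℕ) + 1 = cycFun a b ((t : ℕ) + 1) then 1 else 0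

/-!
In 0-based indices `P` is the permutation matrix of `σ = Fin.cycleRange (j - 1)`, the cycle
`(0 1 ⋯ j-1)`, so `(P A Pᴴ) i k = A (σ⁻¹ i) (σ⁻¹ k)`. If `σ⁻¹ i` or `σ⁻¹ k` is the top `j - 1`
of the cycle the entry lies on the zero cross. Away from that point `σ` moves the indices below
`j - 1` up by one and fixes those above it, so it never increases distances; hence
`|i - k| ≤ |σ⁻¹ i - σ⁻¹ k|` and the radius bound of `A` applies.
-/

lemma Matrix.permMatrix_mul_mul_conjTranspose_permMatrix {n R : Type*} [DecidableEq n] [Fintype n]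
    [Semiring R] [StarRing R] (σ : Equiv.Perm n) (A : Matrix n n R) :
    σ.permMatrix R * A * (σ.permMatrix R)ᴴ = A.submatrix σ σ := by
  rw [conjTranspose_permMatrix, PEquiv.toMatrix_toPEquiv_mul, PEquiv.mul_toMatrix_toPEquiv]
  rfl

lemma Fin.coe_cycleRange_apply {n : ℕ} (c t : Fin n) :
    (c.cycleRange t : ℕ) = if t < c then (t : ℕ) + 1 else if t = c then 0 else t := by
  rcases lt_trichotomy t c with h | rfl | h
  · rw [Fin.coe_cycleRange_of_lt h, if_pos h]
  · rw [Fin.coe_cycleRange_of_le le_rfl, if_neg (lt_irrefl _), if_pos rfl, if_pos rfl]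
  · rw [Fin.cycleRange_of_gt h, if_neg (not_lt_of_gt h), if_neg h.ne']

-- `permMatrix τ` has the `1` of row `s` in column `τ s`, whereas `cycMat` puts the `1` of column `t`
-- in row `σ t`; hence the inverse.
lemma cycMat_one_eq_permMatrix {n j : ℕ} (hj1 : 1 ≤ j) (hjn : j ≤ n) :
    cycMat n 1 j = (Fin.cycleRange ⟨j - 1, Nat.sub_one_lt_of_le hj1 hjn⟩)⁻¹.permMatrix ℂ := by
  ext s t
  simp only [cycMat, of_apply, Equiv.Perm.permMatrix, PEquiv.toMatrix_apply,
    Equiv.toPEquiv_apply, Option.mem_some_iff, Equiv.Perm.inv_def, Equiv.symm_apply_eq,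
    Fin.ext_iff, Fin.coe_cycleRange_apply, cycFun, Fin.lt_def]
  refine if_congr ?_ rfl rfl
  split_ifs <;> omega

lemma Fin.abs_cycleRange_sub_le {n : ℕ} (c a b : Fin n) (ha : a ≠ c) (hb : b ≠ c) :
    |((c.cycleRange a : ℕ) : ℤ) - (c.cycleRange b : ℕ)| ≤ |(a : ℤ) - b| := by
  rw [Fin.coe_cycleRange_apply, Fin.coe_cycleRange_apply, if_neg ha, if_neg hb]
  simp only [Fin.lt_def]
  rcases abs_cases ((a : ℤ) - b) with ⟨h, _⟩ | ⟨h, _⟩ <;> rw [h, abs_le] <;> split_ifs <;> omega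

lemma DiagRadiusLE.submatrix_of_hasZeroCross {n : ℕ} {A : Matrix (Fin n) (Fin n) ℂ} {r : ℕ}
    (hr : DiagRadiusLE A r) {c : Fin n} (hA : HasZeroCross A c) {f : Fin n → Fin n}
    (hf : ∀ i k, f i ≠ c → f k ≠ c → |(i : ℤ) - k| ≤ |((f i : ℕ) : ℤ) - (f k : ℕ)|) :
    DiagRadiusLE (A.submatrix f f) r := by
  intro i k hik
  by_cases hi : f i = c
  · exact (submatrix_apply ..).trans (hi ▸ hA.1 _)
  by_cases hk : f k = c
  · exact (submatrix_apply ..).trans (hk ▸ hA.2 _)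
  exact hr _ _ (hik.trans (hf i k hi hk))

/-- Let `A` be an `n×n` complex matrix with a zero cross at (1-based)
position `j`, and let `P = U[(1 2 ⋯ j)]` be the permutation matrix of the cycle
`(1 2 ⋯ j)` on `{1,…,n}`.  If `A` has diagonal radius at most `r`, then `P ⬝ A ⬝ Pᴴ`
has diagonal radius at most `r`. -/
theorem cycle_conjugation_radius {n : ℕ} (A : Matrix (Fin n) (Fin n) ℂ)
    (j : ℕ) (hj1 : 1 ≤ j) (hjn : j ≤ n)
    (hA : HasZeroCross A ⟨j - 1, by omega⟩)
    (r : ℕ) (hr : DiagRadiusLE A r) :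
    DiagRadiusLE (cycMat n 1 j * A * (cycMat n 1 j)ᴴ) r := by
  rw [cycMat_one_eq_permMatrix hj1 hjn, permMatrix_mul_mul_conjTranspose_permMatrix]
  refine hr.submatrix_of_hasZeroCross hA fun i k hi hk => ?_
  simpa only [Equiv.Perm.coe_inv, Equiv.apply_symm_apply] using Fin.abs_cycleRange_sub_le _ _ _ hi hk
end

section
/- Let 1 ≤ i < j ≤ n, let A be an n×n complex matrix with a zero cross at position j, and let P = U[(i i+1 ⋯ j)] be the permutation matrix of the cycle (i i+1 ⋯ j) on {1,…,n} (fixing the other indices). If A has diagonal radius at most r, then P A P* has diagonal radius at most r + 1. -/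
/-!
Conjugating by `P` relabels the indices by the inverse cycle `(j j-1 ⋯ i)`. Away from the
index `i`, which it sends to the zero cross `j`, this relabelling is monotone and moves each
index down by at most one, so it shortens distances to the diagonal by at most one.
-/

open Matrix

theorem Matrix.mul_mul_conjTranspose_apply_of_row_eq_single {m α : Type*} [Fintype m]
    [DecidableEq m] [Semiring α] [StarRing α] {P A : Matrix m m α} {s t u v : m}
    (hs : P s = Pi.single u 1) (ht : P t = Pi.single v 1) :
    (P * A * Pᴴ) s t = A u v := by
  have hrow : (P * A) s = A u := by rw [mul_apply_eq_vecMul, hs, single_one_vecMul, row]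
  rw [mul_apply, hrow]
  simp [conjTranspose_apply, ht, Pi.single_apply, apply_ite (star : α → α)]

def cycInvFun (a b s : ℕ) : ℕ :=
  if s = a then b else if a < s ∧ s ≤ b then s - 1 else s

theorem cycFun_eq_iff {a b : ℕ} (hab : a ≤ b) (u s : ℕ) :
    cycFun a b u = s ↔ u = cycInvFun a b s := by
  unfold cycFun cycInvFun
  split_ifs <;> omega

theorem cycInvFun_self (a b : ℕ) : cycInvFun a b a = b := if_pos rfl

theorem abs_sub_le_abs_cycInvFun_sub_add_one {a b s t : ℕ} (hs : s ≠ a) (ht : t ≠ a) :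
    |(s : ℤ) - t| ≤ |(cycInvFun a b s : ℤ) - cycInvFun a b t| + 1 := by
  rw [Int.abs_eq_natAbs, Int.abs_eq_natAbs]
  unfold cycInvFun
  split_ifs <;> omega

theorem cycMat_row_eq_single {n i j : ℕ} (hij : i ≤ j) {s u : Fin n}
    (hu : (u : ℕ) + 1 = cycInvFun i j (s + 1)) : cycMat n i j s = Pi.single u 1 := by
  ext w
  have hw : (s : ℕ) + 1 = cycFun i j (w + 1) ↔ w = u := by
    rw [eq_comm, cycFun_eq_iff hij, ← hu, Fin.ext_iff]
    omega
  simp [cycMat, Pi.single_apply, hw]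

theorem exists_succ_eq_cycInvFun {n i j : ℕ} (hi : 1 ≤ i) (hij : i ≤ j) (hjn : j ≤ n)
    (s : Fin n) :
    ∃ u : Fin n, (u : ℕ) + 1 = cycInvFun i j (s + 1) := by
  have hs := s.isLt
  have hbounds : 1 ≤ cycInvFun i j (s + 1) ∧ cycInvFun i j (s + 1) ≤ n := by
    unfold cycInvFun
    split_ifs <;> constructor <;> omega
  exact ⟨⟨_ - 1, by omega⟩, Nat.sub_add_cancel hbounds.1⟩

/-- Let `1 ≤ i < j ≤ n`, let `A` be an `n×n` complex matrix with a zero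
cross at (1-based) position `j`, and let `P = U[(i i+1 ⋯ j)]` be the permutation matrix
of the cycle `(i i+1 ⋯ j)` on `{1,…,n}` (fixing the other indices).  If `A` has diagonal
radius at most `r`, then `P ⬝ A ⬝ Pᴴ` has diagonal radius at most `r + 1`. -/
theorem partial_cycle_conjugation_radius {n : ℕ} (A : Matrix (Fin n) (Fin n) ℂ)
    (i j : ℕ) (hi : 1 ≤ i) (hij : i < j) (hjn : j ≤ n)
    (hA : HasZeroCross A ⟨j - 1, by omega⟩)
    (r : ℕ) (hr : DiagRadiusLE A r) :
    DiagRadiusLE (cycMat n i j * A * (cycMat n i j)ᴴ) (r + 1) := by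
  intro s t hst
  obtain ⟨u, hu⟩ := exists_succ_eq_cycInvFun hi hij.le hjn s
  obtain ⟨v, hv⟩ := exists_succ_eq_cycInvFun hi hij.le hjn t
  rw [mul_mul_conjTranspose_apply_of_row_eq_single (cycMat_row_eq_single hij.le hu)
    (cycMat_row_eq_single hij.le hv)]
  by_cases hs : (s : ℕ) + 1 = i
  · rw [hs, cycInvFun_self] at hu
    rw [show u = ⟨j - 1, by omega⟩ from Fin.ext (show (u : ℕ) = j - 1 by omega)]
    exact hA.1 v
  by_cases ht : (t : ℕ) + 1 = i
  · rw [ht, cycInvFun_self] at hv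
    rw [show v = ⟨j - 1, by omega⟩ from Fin.ext (show (v : ℕ) = j - 1 by omega)]
    exact hA.2 u
  apply hr
  have hdist := abs_sub_le_abs_cycInvFun_sub_add_one (b := j) hs ht
  simp only [← hu, ← hv, Nat.cast_add, Nat.cast_one, add_sub_add_right_eq_sub] at hdist
  push_cast at hst
  linarith
end

section
/- Fix N ∈ ℕ, N ≥ 1. Let k, i, n be indices with N ≤ k, k ≤ i − N, and i ≤ n − N, and let θ ∈ [0,1]. Then u_{η_{k,n}}(θ) = U[η_{i,n}] · u_{η_{k,i}}(θ) · U[η_{i,n}]. -/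
/-! The transpositions making up `η_{i,n}` are disjoint, so `η_{i,n}` is an involution; it fixes
`k−N+1, …, k` and exchanges `i−N+1+j` with `n−N+1+j`. Conjugation by the permutation matrix of an
involution relabels rows and columns, so it carries each factor `u_{(k−N+1+j, i−N+1+j)}(θ)` of
`u_{η_{k,i}}(θ)` to `u_{(k−N+1+j, n−N+1+j)}(θ)`, and, being multiplicative, carries
`u_{η_{k,i}}(θ)` to `u_{η_{k,n}}(θ)`. -/

open Matrix

/-- The matrix `u_{(a b)}(θ)` (1-based indices `a < b`) built from the four functions
`g₁, g₂, g₃, g₄`: it agrees with the identity outside rows/columns `a, b`, and on the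
`{a,b} × {a,b}` corners has entries `g₁ θ, g₂ θ, g₃ θ, g₄ θ`. -/
def uSwap (n : ℕ) (g₁ g₂ g₃ g₄ : ℝ → ℂ) (a b : ℕ) (θ : ℝ) :
    Matrix (Fin n) (Fin n) ℂ :=
  Matrix.of fun s t =>
    if (s : ℕ) + 1 = a ∧ (t : ℕ) + 1 = a then g₁ θ
    else if (s : ℕ) + 1 = a ∧ (t : ℕ) + 1 = b then g₂ θ
    else if (s : ℕ) + 1 = b ∧ (t : ℕ) + 1 = a then g₃ θ
    else if (s : ℕ) + 1 = b ∧ (t : ℕ) + 1 = b then g₄ θ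
    else if s = t then 1 else 0

/-- The permutation matrix `U[(a b)]` of the transposition of the 1-based positions
`a` and `b` of `{1,…,n}`. -/
def swapMat (n : ℕ) (a b : ℕ) : Matrix (Fin n) (Fin n) ℂ :=
  Matrix.of fun s t =>
    if ((s : ℕ) + 1 = a ∧ (t : ℕ) + 1 = b) ∨ ((s : ℕ) + 1 = b ∧ (t : ℕ) + 1 = a) ∨
       (s = t ∧ (s : ℕ) + 1 ≠ a ∧ (s : ℕ) + 1 ≠ b) then 1 else 0

/-- For fixed `N` and 1-based indices `a, b` with `N ≤ a ≤ b − N`,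
`u_{η_{a,b}}(θ) = u_{(a−N+1, b−N+1)}(θ) ⋯ u_{(a, b)}(θ)`. -/
noncomputable def uEta (n N : ℕ) (g₁ g₂ g₃ g₄ : ℝ → ℂ) (a b : ℕ) (θ : ℝ) :
    Matrix (Fin n) (Fin n) ℂ :=
  (List.ofFn fun j : Fin N => uSwap n g₁ g₂ g₃ g₄ (a - N + 1 + (j : ℕ)) (b - N + 1 + (j : ℕ)) θ).prod

/-- The permutation matrix `U[η_{a,b}]` of the product of the `N` disjoint transpositions
`(a−N+1, b−N+1)(a−N+2, b−N+2)⋯(a, b)` of the 1-based index set `{1,…,n}`. -/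
noncomputable def etaPermMat (n N : ℕ) (a b : ℕ) : Matrix (Fin n) (Fin n) ℂ :=
  (List.ofFn fun j : Fin N => swapMat n (a - N + 1 + (j : ℕ)) (b - N + 1 + (j : ℕ))).prod

namespace Equiv.Perm

variable {α : Type*}

theorem list_prod_apply_eq_self {l : List (Perm α)} {x : α} (h : ∀ σ ∈ l, σ x = x) :
    l.prod x = x :=
  List.prod_induction (fun σ : Perm α => σ x = x) (fun σ τ hσ hτ => by rw [mul_apply, hτ, hσ])
    rfl h

theorem prod_ofFn_apply_eq_of_ne {N : ℕ} (f : Fin N → Perm α) (j : Fin N) {x y : α}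
    (hj : f j x = y) (hx : ∀ j' ≠ j, f j' x = x) (hy : ∀ j' ≠ j, f j' y = y) :
    (List.ofFn f).prod x = y := by
  induction N with
  | zero => exact j.elim0
  | succ N ih =>
    rw [List.ofFn_succ, List.prod_cons, mul_apply]
    rcases Fin.eq_zero_or_eq_succ j with rfl | ⟨j, rfl⟩
    · rw [list_prod_apply_eq_self, hj]
      simp only [List.mem_ofFn, forall_exists_index, forall_apply_eq_imp_iff]
      exact fun j' => hx j'.succ (Fin.succ_ne_zero j')
    · rw [ih (fun j' => f j'.succ) j hj (fun j' h => hx j'.succ (by simpa using h))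
        (fun j' h => hy j'.succ (by simpa using h))]
      exact hy 0 (Fin.succ_ne_zero j).symm

variable [DecidableEq α] {N : ℕ}

def swapProd (p q : Fin N → α) : Perm α :=
  (List.ofFn fun j => swap (p j) (q j)).prod

theorem swapProd_comm (p q : Fin N → α) : swapProd p q = swapProd q p := by
  simp only [swapProd, swap_comm]

theorem swapProd_apply_of_forall_ne {p q : Fin N → α} {x : α} (hp : ∀ j, x ≠ p j)
    (hq : ∀ j, x ≠ q j) : swapProd p q x = x :=
  list_prod_apply_eq_self <| by
    simpa [List.mem_ofFn] using fun j => swap_apply_of_ne_of_ne (hp j) (hq j)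

theorem swapProd_apply_left {p q : Fin N → α} (hp : p.Injective) (hq : q.Injective)
    (hpq : ∀ j j', p j ≠ q j') (j : Fin N) : swapProd p q (p j) = q j :=
  prod_ofFn_apply_eq_of_ne _ j (swap_apply_left _ _)
    (fun j' h => swap_apply_of_ne_of_ne (hp.ne h.symm) (hpq j j'))
    (fun j' h => swap_apply_of_ne_of_ne (hpq j' j).symm (hq.ne h.symm))

theorem swapProd_apply_right {p q : Fin N → α} (hp : p.Injective) (hq : q.Injective)
    (hpq : ∀ j j', p j ≠ q j') (j : Fin N) : swapProd p q (q j) = p j := by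
  rw [swapProd_comm]
  exact swapProd_apply_left hq hp (fun j j' => (hpq j' j).symm) j

theorem swapProd_involutive {p q : Fin N → α} (hp : p.Injective) (hq : q.Injective)
    (hpq : ∀ j j', p j ≠ q j') : Function.Involutive (swapProd p q) := by
  intro x
  by_cases hxp : ∃ j, x = p j
  · obtain ⟨j, rfl⟩ := hxp
    rw [swapProd_apply_left hp hq hpq, swapProd_apply_right hp hq hpq]
  by_cases hxq : ∃ j, x = q j
  · obtain ⟨j, rfl⟩ := hxq
    rw [swapProd_apply_right hp hq hpq, swapProd_apply_left hp hq hpq]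
  push Not at hxp hxq
  rw [swapProd_apply_of_forall_ne hxp hxq, swapProd_apply_of_forall_ne hxp hxq]

end Equiv.Perm

namespace Matrix

variable {ι R : Type*} [DecidableEq ι]

def planeMatrix [Zero R] [One R] (p q : ι) (a b c d : R) : Matrix ι ι R :=
  of fun s t =>
    if s = p ∧ t = p then a
    else if s = p ∧ t = q then b
    else if s = q ∧ t = p then c
    else if s = q ∧ t = q then d
    else if s = t then 1 else 0

theorem reindex_planeMatrix [Zero R] [One R] (σ : Equiv.Perm ι) (p q : ι) (a b c d : R) :
    reindex σ σ (planeMatrix p q a b c d) = planeMatrix (σ p) (σ q) a b c d := by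
  ext s t
  simp only [reindex_apply, submatrix_apply, planeMatrix, of_apply, Equiv.symm_apply_eq,
    EmbeddingLike.apply_eq_iff_eq]

theorem permMatrix_mul_mul_permMatrix [Fintype ι] [NonAssocSemiring R] {σ : Equiv.Perm ι}
    (hσ : Function.Involutive σ) (M : Matrix ι ι R) :
    σ.permMatrix R * M * σ.permMatrix R = reindex σ σ M := by
  rw [Equiv.Perm.permMatrix, PEquiv.toMatrix_toPEquiv_mul, PEquiv.mul_toMatrix_toPEquiv,
    reindex_apply, submatrix_submatrix, hσ.symm_eq_self_of_involutive]
  rfl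

end Matrix

open Equiv.Perm

section

variable {n : ℕ}

theorem uSwap_eq_planeMatrix (g₁ g₂ g₃ g₄ : ℝ → ℂ) (θ : ℝ) (p q : Fin n) :
    uSwap n g₁ g₂ g₃ g₄ (p + 1) (q + 1) θ = planeMatrix p q (g₁ θ) (g₂ θ) (g₃ θ) (g₄ θ) := by
  ext s t
  simp only [uSwap, planeMatrix, of_apply, add_left_inj, Fin.val_inj]

theorem swapMat_eq_swap (p q : Fin n) : swapMat n (p + 1) (q + 1) = Matrix.swap ℂ p q := by
  ext s t
  simp only [swapMat, of_apply, add_left_inj, Fin.val_inj, Matrix.swap, permMatrix,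
    PEquiv.toMatrix_apply, Equiv.toPEquiv_apply, Option.mem_some_iff, Equiv.swap_apply_def]
  split_ifs <;> simp_all <;> grind

variable {N a b : ℕ} {p q : Fin N → Fin n}

theorem uEta_eq_prod_planeMatrix (hp : ∀ j, (p j : ℕ) = a - N + j)
    (hq : ∀ j, (q j : ℕ) = b - N + j) (g₁ g₂ g₃ g₄ : ℝ → ℂ) (θ : ℝ) :
    uEta n N g₁ g₂ g₃ g₄ a b θ =
      (List.ofFn fun j => planeMatrix (p j) (q j) (g₁ θ) (g₂ θ) (g₃ θ) (g₄ θ)).prod := by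
  simp only [uEta, ← uSwap_eq_planeMatrix, hp, hq, add_right_comm]

theorem etaPermMat_eq_permMatrix_swapProd_inv (hp : ∀ j, (p j : ℕ) = a - N + j)
    (hq : ∀ j, (q j : ℕ) = b - N + j) :
    etaPermMat n N a b = (swapProd p q)⁻¹.permMatrix ℂ := by
  rw [← permMatrixHom_apply, swapProd, map_list_prod, List.map_ofFn, etaPermMat]
  congr 2
  funext j
  rw [Function.comp_apply, permMatrixHom_apply, Equiv.swap_inv, ← Matrix.swap, ← swapMat_eq_swap]
  simp only [hp, hq, add_right_comm]

end

theorem uEta_conj_general {n : ℕ} (N : ℕ) (g₁ g₂ g₃ g₄ : ℝ → ℂ) (k i : ℕ)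
    (hNk : N ≤ k) (hki : k + N ≤ i) (hin : i + N ≤ n)
    (θ : ℝ) :
    uEta n N g₁ g₂ g₃ g₄ k n θ =
      etaPermMat n N i n * uEta n N g₁ g₂ g₃ g₄ k i θ * etaPermMat n N i n := by
  let K : Fin N → Fin n := fun j => ⟨k - N + j, by omega⟩
  let I : Fin N → Fin n := fun j => ⟨i - N + j, by omega⟩
  let M : Fin N → Fin n := fun j => ⟨n - N + j, by omega⟩
  have hI : I.Injective := fun j j' h => Fin.ext (by simpa [I] using h)
  have hM : M.Injective := fun j j' h => Fin.ext (by simpa [M] using h)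
  have hIM : ∀ j j', I j ≠ M j' := fun j j' => Fin.ne_of_val_ne (by dsimp only [I, M]; omega)
  have hη := swapProd_involutive hI hM hIM
  have hηK : ∀ j, swapProd I M (K j) = K j := fun j =>
    swapProd_apply_of_forall_ne (fun j' => Fin.ne_of_val_ne (by dsimp only [I, K]; omega))
      (fun j' => Fin.ne_of_val_ne (by dsimp only [M, K]; omega))
  rw [uEta_eq_prod_planeMatrix (p := K) (q := M) (fun _ => rfl) (fun _ => rfl),
    uEta_eq_prod_planeMatrix (p := K) (q := I) (fun _ => rfl) (fun _ => rfl),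
    etaPermMat_eq_permMatrix_swapProd_inv (p := I) (q := M) (fun _ => rfl) (fun _ => rfl),
    Equiv.Perm.inv_def, hη.symm_eq_self_of_involutive, permMatrix_mul_mul_permMatrix hη,
    ← coe_reindexRingEquiv, map_list_prod, List.map_ofFn]
  simp only [Function.comp_def, coe_reindexRingEquiv, reindex_planeMatrix, hηK,
    swapProd_apply_left hI hM hIM]

/-- Fix `N ≥ 1`.  If `N ≤ k`, `k ≤ i − N` and `i ≤ n − N` (1-based indices),
then for `θ ∈ [0,1]`, `u_{η_{k,n}}(θ) = U[η_{i,n}] ⬝ u_{η_{k,i}}(θ) ⬝ U[η_{i,n}]`. -/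
theorem uEta_conj {n : ℕ} (N : ℕ) (hN : 1 ≤ N) (g₁ g₂ g₃ g₄ : ℝ → ℂ) (k i : ℕ)
    (hNk : N ≤ k) (hki : k + N ≤ i) (hin : i + N ≤ n)
    (θ : ℝ) (hθ : θ ∈ Set.Icc (0 : ℝ) 1) :
    uEta n N g₁ g₂ g₃ g₄ k n θ =
      etaPermMat n N i n * uEta n N g₁ g₂ g₃ g₄ k i θ * etaPermMat n N i n :=
  uEta_conj_general N g₁ g₂ g₃ g₄ k i hNk hki hin θ
end

section
/- Fix N ∈ ℕ, N ≥ 1. For indices i, n with N + 1 ≤ i and i ≤ n − N, the following identity of n×n permutation matrices holds: U[γ_{1,n}]^N · U[η_{i−1,n}] = U[γ_{1,i−1}]^N · U[γ_{i,n}]^N. -/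
open Matrix

/-!
Every matrix in the identity has the form `s, t ↦ [s = f t]` for a self-map `f` of
`{1,…,n}`, and products of such matrices correspond to composition of the maps. The `N`-th
powers of the cycles are rotations with explicit formulas, and `η` swaps the blocks
`[i-N, i)` and `(n-N, n]`, so the identity reduces to comparing two explicit maps on
`{1,…,n}`: both rotate `[1, i)` and `[i, n]` by `N` separately.
-/

def mapMat (n : ℕ) (f : ℕ → ℕ) : Matrix (Fin n) (Fin n) ℂ :=
  Matrix.of fun s t => if (s : ℕ) + 1 = f ((t : ℕ) + 1) then 1 else 0

def swapFun (a b s : ℕ) : ℕ := if s = a then b else if s = b then a else s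

/-- Exchanges the blocks `[c, c + K)` and `[d, d + K)`, preserving order within them. -/
def blockSwapFun (K c d s : ℕ) : ℕ :=
  if c ≤ s ∧ s < c + K then s + (d - c)
  else if d ≤ s ∧ s < d + K then s - (d - c) else s

/-- Rotation of `[a, b]` by `k` steps, valid as a closed form only for `k ≤ b + 1 - a`. -/
def rotFun (a b k s : ℕ) : ℕ :=
  if a ≤ s ∧ s ≤ b then (if s + k ≤ b then s + k else s + k - (b + 1 - a)) else s

section mapMat

variable {n : ℕ}

lemma mapMat_id : mapMat n id = 1 := by
  ext s t
  simp [mapMat, Matrix.one_apply, Fin.val_inj]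

lemma mapMat_congr {f g : ℕ → ℕ} (h : Set.EqOn f g (Set.Icc 1 n)) :
    mapMat n f = mapMat n g := by
  ext s t
  simp only [mapMat, Matrix.of_apply]
  rw [h ⟨by omega, by omega⟩]

lemma mapMat_mul (f : ℕ → ℕ) {g : ℕ → ℕ} (hg : Set.MapsTo g (Set.Icc 1 n) (Set.Icc 1 n)) :
    mapMat n f * mapMat n g = mapMat n (f ∘ g) := by
  ext s t
  obtain ⟨hg₁, hg₂⟩ := hg (⟨by omega, by omega⟩ : (t : ℕ) + 1 ∈ Set.Icc 1 n)
  let u : Fin n := ⟨g ((t : ℕ) + 1) - 1, by omega⟩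
  have hu : (u : ℕ) + 1 = g ((t : ℕ) + 1) := by simp only [u]; omega
  rw [Matrix.mul_apply, Finset.sum_eq_single u]
  · simp [mapMat, hu]
  · intro k _ hk
    have : (k : ℕ) + 1 ≠ g ((t : ℕ) + 1) := fun h => hk (Fin.ext (by omega))
    simp [mapMat, this]
  · simp

lemma mapMat_pow {f : ℕ → ℕ} (hf : Set.MapsTo f (Set.Icc 1 n) (Set.Icc 1 n)) (N : ℕ) :
    mapMat n f ^ N = mapMat n f^[N] := by
  induction N with
  | zero => simp [mapMat_id]
  | succ N ih => rw [pow_succ, ih, mapMat_mul _ hf, Function.iterate_succ]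

end mapMat

lemma cycMat_eq_mapMat (n a b : ℕ) : cycMat n a b = mapMat n (cycFun a b) := rfl

lemma swapMat_eq_mapMat (n a b : ℕ) : swapMat n a b = mapMat n (swapFun a b) := by
  ext s t
  simp only [swapMat, mapMat, Matrix.of_apply, swapFun, ← Fin.val_inj]
  split_ifs <;> simp_all <;> omega

lemma cycFun_mapsTo {n a b : ℕ} (ha : 1 ≤ a) (han : a ≤ n) (hb : b ≤ n) :
    Set.MapsTo (cycFun a b) (Set.Icc 1 n) (Set.Icc 1 n) := by
  intro s ⟨hs₁, hs₂⟩
  unfold cycFun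
  constructor <;> split_ifs <;> omega

lemma blockSwapFun_mapsTo {n K c d : ℕ} (hc : 1 ≤ c) (hcd : c ≤ d) (hd : d + K ≤ n + 1) :
    Set.MapsTo (blockSwapFun K c d) (Set.Icc 1 n) (Set.Icc 1 n) := by
  intro s ⟨hs₁, hs₂⟩
  unfold blockSwapFun
  constructor <;> split_ifs <;> omega

lemma cycFun_iterate {a b k : ℕ} (hk : k ≤ b + 1 - a) : (cycFun a b)^[k] = rotFun a b k := by
  induction k with
  | zero =>
    funext s
    simp only [Function.iterate_zero, id_eq, rotFun]
    split_ifs <;> omega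
  | succ k ih =>
    funext s
    rw [Function.iterate_succ_apply', ih (by omega)]
    unfold cycFun rotFun
    split_ifs <;> omega

lemma prod_swapMat_eq_mapMat_blockSwapFun {n K c d : ℕ} (hc : 1 ≤ c) (hcd : c + K ≤ d)
    (hd : d + K ≤ n + 1) :
    (List.ofFn fun j : Fin K => swapMat n (c + j) (d + j)).prod =
      mapMat n (blockSwapFun K c d) := by
  induction K generalizing c d with
  | zero =>
    rw [List.ofFn_zero, List.prod_nil, ← mapMat_id]
    refine mapMat_congr fun s _ => ?_
    simp only [id, blockSwapFun]
    split_ifs <;> omega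
  | succ K ih =>
    simp only [List.ofFn_succ, Fin.val_zero, add_zero, Fin.val_succ, List.prod_cons,
      ← add_assoc, add_right_comm _ _ 1]
    rw [ih (by omega) (by omega) (by omega), swapMat_eq_mapMat,
      mapMat_mul _ (blockSwapFun_mapsTo (by omega) (by omega) (by omega))]
    refine mapMat_congr fun s _ => ?_
    simp only [Function.comp, blockSwapFun, swapFun]
    split_ifs <;> omega

lemma etaPermMat_eq_mapMat {n N a b : ℕ} (ha : N ≤ a) (hab : a + N ≤ b) (hb : b ≤ n) :
    etaPermMat n N a b = mapMat n (blockSwapFun N (a - N + 1) (b - N + 1)) :=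
  prod_swapMat_eq_mapMat_blockSwapFun (by omega) (by omega) (by omega)

theorem cycle_eta_identity_general {n : ℕ} (N : ℕ) (i : ℕ)
    (hi : N + 1 ≤ i) (hin : i + N ≤ n) :
    (cycMat n 1 n) ^ N * etaPermMat n N (i - 1) n =
      (cycMat n 1 (i - 1)) ^ N * (cycMat n i n) ^ N := by
  have hcyc : Set.MapsTo (cycFun 1 n) (Set.Icc 1 n) (Set.Icc 1 n) :=
    cycFun_mapsTo le_rfl (by omega) le_rfl
  have hcyc_lo : Set.MapsTo (cycFun 1 (i - 1)) (Set.Icc 1 n) (Set.Icc 1 n) :=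
    cycFun_mapsTo le_rfl (by omega) (by omega)
  have hcyc_hi : Set.MapsTo (cycFun i n) (Set.Icc 1 n) (Set.Icc 1 n) :=
    cycFun_mapsTo (by omega) (by omega) le_rfl
  have hblock : Set.MapsTo (blockSwapFun N (i - 1 - N + 1) (n - N + 1)) (Set.Icc 1 n)
      (Set.Icc 1 n) :=
    blockSwapFun_mapsTo (by omega) (by omega) (by omega)
  rw [cycMat_eq_mapMat, cycMat_eq_mapMat, cycMat_eq_mapMat,
    etaPermMat_eq_mapMat (by omega) (by omega) le_rfl, mapMat_pow hcyc, mapMat_pow hcyc_lo,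
    mapMat_pow hcyc_hi, mapMat_mul _ hblock, mapMat_mul _ (hcyc_hi.iterate N),
    cycFun_iterate (by omega), cycFun_iterate (by omega), cycFun_iterate (by omega)]
  refine mapMat_congr fun s ⟨hs₁, hs₂⟩ => ?_
  simp only [Function.comp, rotFun, blockSwapFun]
  split_ifs <;> omega

/-- Fix `N ≥ 1`.  For 1-based indices `i, n` with `N + 1 ≤ i` and
`i ≤ n − N`, the identity `U[γ_{1,n}]^N ⬝ U[η_{i−1,n}] = U[γ_{1,i−1}]^N ⬝ U[γ_{i,n}]^N`
holds among `n × n` permutation matrices. -/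
theorem cycle_eta_identity {n : ℕ} (N : ℕ) (hN : 1 ≤ N) (i : ℕ)
    (hi : N + 1 ≤ i) (hin : i + N ≤ n) :
    (cycMat n 1 n) ^ N * etaPermMat n N (i - 1) n =
      (cycMat n 1 (i - 1)) ^ N * (cycMat n i n) ^ N :=
  cycle_eta_identity_general N i hi hin
end

section
/- Fix N ∈ ℕ, N ≥ 1, and n > N. Let Θ ∈ [0,1]^n satisfy: Θ_1 = 1; Θ_k = 0 for k ∈ {n−N+1,…,n}; and among any N consecutive entries of Θ at most one is nonzero. Let A be an n×n complex matrix such that A has diagonal radius at most N and, whenever Θ_k > 0, A has zero crosses at positions k, k+1, …, k+N−1. Then A · V_n(Θ) is strictly lower triangular, i.e. (A · V_n(Θ))_{i,j} = 0 whenever i ≤ j. -/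
open Matrix

/-- For `Θ ∈ [0,1]^n` (as a function of 1-based indices),
`V_n(Θ) = U[γ_{1,n}]^N ⬝ ∏_{k=N}^{n−1} u_{η_{k,n}}(Θ_{k+1})`. -/
noncomputable def Vn (n N : ℕ) (g₁ g₂ g₃ g₄ : ℝ → ℂ) (Θ : ℕ → ℝ) :
    Matrix (Fin n) (Fin n) ℂ :=
  (cycMat n 1 n) ^ N *
    (List.ofFn fun j : Fin (n - N) =>
      uEta n N g₁ g₂ g₃ g₄ (N + (j : ℕ)) n (Θ (N + (j : ℕ) + 1))).prod

/-!
Right multiplication by `U[γ_{1,n}]^N` moves column `j + N` (mod `n`) of `A` to position `j`.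
Hence `A U[γ_{1,n}]^N` is strictly lower triangular: for `j + N < n` the entry `A i (j + N)` with
`i ≤ j` lies outside the band, and the wrapped-around columns are the first `N` columns of `A`,
which vanish because `Θ₁ = 1`. A factor `u_{(a b)}` with `a < b` only mixes columns `a` and `b`;
if column `a` is zero it becomes a multiple of column `b`, so strict lower triangularity survives.
The factor `u_{η_{k,n}}(Θ_{k+1})` is the identity when `Θ_{k+1} = 0`; otherwise it pairs the columns
`k−N+1, …, k` with the last `N` columns, and the former are zero, since they come from the zero
cross of `A` at `k+1, …, k+N`. Sparsity of `Θ` makes these blocks disjoint, so no block is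
disturbed before its own factor is applied.
-/

def IsStrictLowerTriangular {n : ℕ} {R : Type*} [Zero R] (M : Matrix (Fin n) (Fin n) R) : Prop :=
  ∀ i j : Fin n, i ≤ j → M i j = 0

section Swap

variable {n : ℕ} {g₁ g₂ g₃ g₄ : ℝ → ℂ}

theorem uSwap_zero (hg₁ : g₁ 0 = 1) (hg₂ : g₂ 0 = 0) (hg₃ : g₃ 0 = 0) (hg₄ : g₄ 0 = 1)
    (a b : ℕ) : uSwap n g₁ g₂ g₃ g₄ a b 0 = 1 := by
  ext s t
  simp only [uSwap, of_apply, one_apply, hg₁, hg₂, hg₃, hg₄]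
  split_ifs <;> first | rfl | (exfalso; omega)

theorem uEta_zero (hg₁ : g₁ 0 = 1) (hg₂ : g₂ 0 = 0) (hg₃ : g₃ 0 = 0) (hg₄ : g₄ 0 = 1)
    (N a b : ℕ) : uEta n N g₁ g₂ g₃ g₄ a b 0 = 1 :=
  List.prod_eq_one <| by simp [uSwap_zero hg₁ hg₂ hg₃ hg₄]

theorem mul_uSwap_apply_of_ne (M : Matrix (Fin n) (Fin n) ℂ) (a b : ℕ) (θ : ℝ) (i c : Fin n)
    (hca : (c : ℕ) + 1 ≠ a) (hcb : (c : ℕ) + 1 ≠ b) :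
    (M * uSwap n g₁ g₂ g₃ g₄ a b θ) i c = M i c := by
  rw [mul_apply, Finset.sum_eq_single c]
  · simp [uSwap, hca, hcb]
  · intro s _ hsc
    simp [uSwap, hca, hcb, hsc]
  · simp

theorem mul_prod_uSwap_apply_of_ne {J : ℕ} (M : Matrix (Fin n) (Fin n) ℂ) (α β : Fin J → ℕ)
    (θ : ℝ) (i c : Fin n) (hc : ∀ j, (c : ℕ) + 1 ≠ α j ∧ (c : ℕ) + 1 ≠ β j) :
    (M * (List.ofFn fun j => uSwap n g₁ g₂ g₃ g₄ (α j) (β j) θ).prod) i c = M i c := by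
  induction J generalizing M with
  | zero => simp
  | succ J ih =>
    rw [List.ofFn_succ, List.prod_cons, ← Matrix.mul_assoc,
      ih _ (fun j => α j.succ) (fun j => β j.succ) fun j => hc j.succ,
      mul_uSwap_apply_of_ne _ _ _ _ _ _ (hc 0).1 (hc 0).2]

theorem IsStrictLowerTriangular.mul_uSwap {M : Matrix (Fin n) (Fin n) ℂ}
    (hM : IsStrictLowerTriangular M) {a b : ℕ} (hab : a ≤ b)
    (hcol : ∀ s : Fin n, (s : ℕ) + 1 = a → ∀ i, M i s = 0) (θ : ℝ) :
    IsStrictLowerTriangular (M * uSwap n g₁ g₂ g₃ g₄ a b θ) := by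
  intro i c hic
  rw [mul_apply]
  refine Finset.sum_eq_zero fun s _ => ?_
  simp only [uSwap, of_apply]
  split_ifs with h₁ h₂ h₃ h₄ h₅
  · rw [hcol s h₁.1, zero_mul]
  · rw [hcol s h₂.1, zero_mul]
  · rw [hM i s (by omega), zero_mul]
  · rw [hM i s (by omega), zero_mul]
  · rw [hM i s (h₅ ▸ hic), zero_mul]
  · rw [mul_zero]

theorem IsStrictLowerTriangular.mul_prod_uSwap {J : ℕ} {M : Matrix (Fin n) (Fin n) ℂ}
    (hM : IsStrictLowerTriangular M) {α β : Fin J → ℕ} (hαβ : ∀ j, α j ≤ β j)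
    (hα : Function.Injective α) (hdisj : ∀ j j', α j ≠ β j')
    (hcol : ∀ j, ∀ s : Fin n, (s : ℕ) + 1 = α j → ∀ i, M i s = 0) (θ : ℝ) :
    IsStrictLowerTriangular
      (M * (List.ofFn fun j => uSwap n g₁ g₂ g₃ g₄ (α j) (β j) θ).prod) := by
  induction J generalizing M with
  | zero => simpa using hM
  | succ J ih =>
    rw [List.ofFn_succ, List.prod_cons, ← Matrix.mul_assoc]
    refine ih (hM.mul_uSwap (hαβ 0) (hcol 0) θ) (fun j => hαβ j.succ)
      (hα.comp (Fin.succ_injective J)) (fun j j' => hdisj j.succ j'.succ) fun j s hs i => ?_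
    have hs₀ : (s : ℕ) + 1 ≠ α 0 := hs ▸ hα.ne (Fin.succ_ne_zero j)
    rw [mul_uSwap_apply_of_ne _ _ _ _ _ _ hs₀ (hs ▸ hdisj j.succ 0), hcol j.succ s hs i]

end Swap

section Eta

variable {n N : ℕ} {g₁ g₂ g₃ g₄ : ℝ → ℂ}

theorem IsStrictLowerTriangular.mul_uEta {M : Matrix (Fin n) (Fin n) ℂ}
    (hM : IsStrictLowerTriangular M) {a b : ℕ} (hNa : N ≤ a) (hab : a + N ≤ b)
    (hcol : ∀ s : Fin n, a ≤ s + N → (s : ℕ) < a → ∀ i, M i s = 0) (θ : ℝ) :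
    IsStrictLowerTriangular (M * uEta n N g₁ g₂ g₃ g₄ a b θ) :=
  hM.mul_prod_uSwap (fun _ => by omega) (fun j j' h => Fin.ext (by simpa using h))
    (fun _ _ => by omega) (fun j s hs => hcol s (by omega) (by omega)) θ

theorem mul_uEta_apply_of_le (M : Matrix (Fin n) (Fin n) ℂ) {a b : ℕ} (θ : ℝ) (i c : Fin n)
    (hNa : N ≤ a) (hac : a ≤ c) (hcb : c + N < b) :
    (M * uEta n N g₁ g₂ g₃ g₄ a b θ) i c = M i c :=
  mul_prod_uSwap_apply_of_ne M _ _ θ i c fun _ => ⟨by omega, by omega⟩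

end Eta

section Cycle

variable {n : ℕ} [NeZero n]

theorem cycMat_one_apply (s t : Fin n) :
    cycMat n 1 n s t = if s = Fin.ofNat n (t + 1) then 1 else 0 := by
  have hcyc : cycFun 1 n ((t : ℕ) + 1) = ((t : ℕ) + 1) % n + 1 := by
    rw [cycFun]
    by_cases h : (t : ℕ) + 1 < n
    · rw [if_pos ⟨by omega, h⟩, Nat.mod_eq_of_lt h]
    · have h' : (t : ℕ) + 1 = n := by omega
      rw [if_neg (by omega), if_pos h', h', Nat.mod_self]
  simp only [cycMat, of_apply, hcyc, Nat.add_right_cancel_iff, Fin.ext_iff, Fin.val_ofNat]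

theorem mul_cycMat_one_apply (M : Matrix (Fin n) (Fin n) ℂ) (i t : Fin n) :
    (M * cycMat n 1 n) i t = M i (Fin.ofNat n (t + 1)) := by
  simp [mul_apply, cycMat_one_apply]

theorem mul_cycMat_one_pow_apply (M : Matrix (Fin n) (Fin n) ℂ) (m : ℕ) (i t : Fin n) :
    (M * cycMat n 1 n ^ m) i t = M i (Fin.ofNat n (t + m)) := by
  induction m generalizing t with
  | zero => simp
  | succ m ih =>
    rw [pow_succ, ← Matrix.mul_assoc, mul_cycMat_one_apply, ih]
    congr 1
    ext
    simp only [Fin.val_ofNat, Nat.mod_add_mod, add_assoc, add_comm 1 m]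

theorem DiagRadiusLE.isStrictLowerTriangular_mul_cycMat_pow {A : Matrix (Fin n) (Fin n) ℂ} {N : ℕ}
    (hrad : DiagRadiusLE A N) (hcol : ∀ s : Fin n, (s : ℕ) < N → ∀ i, A i s = 0) :
    IsStrictLowerTriangular (A * cycMat n 1 n ^ N) := by
  intro i t hit
  rw [mul_cycMat_one_pow_apply]
  by_cases h : (t : ℕ) + N < n
  · refine hrad _ _ ?_
    rw [Fin.val_ofNat, Nat.mod_eq_of_lt h, le_abs]
    have : (i : ℕ) ≤ t := hit
    right; push_cast; omega
  · refine hcol _ ?_ i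
    rw [Fin.val_ofNat, Nat.mod_eq_sub_mod (by omega)]
    exact (Nat.mod_le _ _).trans_lt (by omega)

end Cycle

section Sweep

variable {n N : ℕ} {g₁ g₂ g₃ g₄ : ℝ → ℂ} {Θ : ℕ → ℝ}

/-- The columns `[k - N, k)` (0-based) are the ones `u_{η_{k,n}}` moves into the last `N`
columns; they must still vanish when that factor is applied. -/
def PendingColumnsVanish (N : ℕ) (Θ : ℕ → ℝ) (k₀ : ℕ) (M : Matrix (Fin n) (Fin n) ℂ) : Prop :=
  ∀ k, k₀ ≤ k → k < n → Θ (k + 1) ≠ 0 →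
    ∀ s : Fin n, k ≤ s + N → (s : ℕ) < k → ∀ i, M i s = 0

theorem IsStrictLowerTriangular.mul_uEta_of_pendingColumnsVanish
    (hg₁ : g₁ 0 = 1) (hg₂ : g₂ 0 = 0) (hg₃ : g₃ 0 = 0) (hg₄ : g₄ 0 = 1)
    (hΘtail : ∀ p, n - N + 1 ≤ p → p ≤ n → Θ p = 0)
    (hΘsparse : ∀ p q, 1 ≤ p → p < q → q < p + N → q ≤ n → Θ p ≠ 0 → Θ q = 0)
    {M : Matrix (Fin n) (Fin n) ℂ} (hM : IsStrictLowerTriangular M) {k : ℕ} (hNk : N ≤ k)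
    (hkn : k < n) (hP : PendingColumnsVanish N Θ k M) :
    IsStrictLowerTriangular (M * uEta n N g₁ g₂ g₃ g₄ k n (Θ (k + 1))) ∧
      PendingColumnsVanish N Θ (k + 1) (M * uEta n N g₁ g₂ g₃ g₄ k n (Θ (k + 1))) := by
  by_cases hθ : Θ (k + 1) = 0
  · rw [hθ, uEta_zero hg₁ hg₂ hg₃ hg₄, Matrix.mul_one]
    exact ⟨hM, fun k' hk' => hP k' (by omega)⟩
  have hkN : k + N < n := by
    by_contra h
    exact hθ (hΘtail _ (by omega) (by omega))
  refine ⟨hM.mul_uEta hNk (by omega) (hP k le_rfl hkn hθ) _, ?_⟩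
  intro k' hk' hk'n hθ' s hs₁ hs₂ i
  -- blocks of nonzero entries of `Θ` are disjoint and lie left of the last `N` columns
  have hkk' : k + N ≤ k' := by
    by_contra h
    exact hθ' (hΘsparse (k + 1) (k' + 1) (by omega) (by omega) (by omega) (by omega) hθ)
  have hk'N : k' + N < n := by
    by_contra h
    exact hθ' (hΘtail _ (by omega) (by omega))
  rw [mul_uEta_apply_of_le _ _ _ _ hNk (by omega) (by omega)]
  exact hP k' (by omega) hk'n hθ' s hs₁ hs₂ i

theorem IsStrictLowerTriangular.mul_prod_uEta
    (hg₁ : g₁ 0 = 1) (hg₂ : g₂ 0 = 0) (hg₃ : g₃ 0 = 0) (hg₄ : g₄ 0 = 1)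
    (hΘtail : ∀ p, n - N + 1 ≤ p → p ≤ n → Θ p = 0)
    (hΘsparse : ∀ p q, 1 ≤ p → p < q → q < p + N → q ≤ n → Θ p ≠ 0 → Θ q = 0)
    {M : Matrix (Fin n) (Fin n) ℂ} (hM : IsStrictLowerTriangular M) {k₀ : ℕ} (hNk₀ : N ≤ k₀)
    (hP : PendingColumnsVanish N Θ k₀ M) {m : ℕ} (hm : k₀ + m ≤ n) :
    IsStrictLowerTriangular (M * (List.ofFn fun j : Fin m =>
        uEta n N g₁ g₂ g₃ g₄ (k₀ + j) n (Θ (k₀ + j + 1))).prod) ∧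
      PendingColumnsVanish N Θ (k₀ + m) (M * (List.ofFn fun j : Fin m =>
        uEta n N g₁ g₂ g₃ g₄ (k₀ + j) n (Θ (k₀ + j + 1))).prod) := by
  induction m with
  | zero => simpa using ⟨hM, hP⟩
  | succ m ih =>
    obtain ⟨hM', hP'⟩ := ih (by omega)
    rw [List.ofFn_succ', List.prod_concat, ← Matrix.mul_assoc]
    exact hM'.mul_uEta_of_pendingColumnsVanish hg₁ hg₂ hg₃ hg₄ hΘtail hΘsparse (by omega)
      (by omega) hP'

theorem pendingColumnsVanish_mul_cycMat_pow [NeZero n] {A : Matrix (Fin n) (Fin n) ℂ}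
    (hΘtail : ∀ p, n - N + 1 ≤ p → p ≤ n → Θ p = 0)
    (hcol : ∀ k, k < n → Θ (k + 1) ≠ 0 → ∀ s : Fin n, k ≤ s → (s : ℕ) < k + N → ∀ i, A i s = 0)
    (k₀ : ℕ) : PendingColumnsVanish N Θ k₀ (A * cycMat n 1 n ^ N) := by
  intro k _ hkn hθ s hs₁ hs₂ i
  have hkN : k + N < n := by
    by_contra h
    exact hθ (hΘtail _ (by omega) (by omega))
  rw [mul_cycMat_one_pow_apply]
  exact hcol k hkn hθ _ (by rw [Fin.val_ofNat, Nat.mod_eq_of_lt (by omega)]; omega)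
    (by rw [Fin.val_ofNat, Nat.mod_eq_of_lt (by omega)]; omega) i

end Sweep

theorem mul_Vn_strictly_lower_triangular_general {n N : ℕ} (hn : N < n)
    (g₁ g₂ g₃ g₄ : ℝ → ℂ)
    (hg₁ : g₁ 0 = 1) (hg₄ : g₄ 0 = 1) (hg₂ : g₂ 0 = 0) (hg₃ : g₃ 0 = 0)
    (Θ : ℕ → ℝ) (hΘmem : ∀ p, 1 ≤ p → p ≤ n → Θ p ∈ Set.Icc (0 : ℝ) 1)
    (hΘ1 : Θ 1 = 1)
    (hΘtail : ∀ p, n - N + 1 ≤ p → p ≤ n → Θ p = 0)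
    (hΘsparse : ∀ p q, 1 ≤ p → p < q → q < p + N → q ≤ n → Θ p ≠ 0 → Θ q = 0)
    (A : Matrix (Fin n) (Fin n) ℂ)
    (hrad : DiagRadiusLE A N)
    (hcross : ∀ p, 1 ≤ p → p ≤ n → 0 < Θ p →
      ∀ i : Fin n, p ≤ (i : ℕ) + 1 → (i : ℕ) + 1 < p + N → HasZeroCross A i) :
    ∀ i j : Fin n, (i : ℕ) ≤ (j : ℕ) → (A * Vn n N g₁ g₂ g₃ g₄ Θ) i j = 0 := by
  have : NeZero n := ⟨by omega⟩
  have hcol : ∀ k, k < n → Θ (k + 1) ≠ 0 →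
      ∀ s : Fin n, k ≤ s → (s : ℕ) < k + N → ∀ i, A i s = 0 := fun k hk hθ s hs₁ hs₂ =>
    (hcross (k + 1) (by omega) hk ((hΘmem _ (by omega) hk).1.lt_of_ne' hθ) s (by omega)
      (by omega)).2
  have hB : IsStrictLowerTriangular (A * cycMat n 1 n ^ N) :=
    hrad.isStrictLowerTriangular_mul_cycMat_pow fun s hs =>
      hcol 0 (by omega) (by simp [hΘ1]) s (Nat.zero_le _) (by omega)
  intro i j hij
  rw [Vn, ← Matrix.mul_assoc]
  exact (hB.mul_prod_uEta hg₁ hg₂ hg₃ hg₄ hΘtail hΘsparse le_rfl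
    (pendingColumnsVanish_mul_cycMat_pow hΘtail hcol N) (by omega)).1 i j hij

/-- Fix `N ≥ 1` and `n > N`.  Let `Θ ∈ [0,1]^n` (1-based indices) satisfy
`Θ 1 = 1`, `Θ p = 0` for `p ∈ {n−N+1,…,n}`, and have at most one nonzero among any `N`
consecutive entries.  Let `A` be an `n×n` complex matrix with diagonal radius at most `N`
such that whenever `Θ p > 0`, `A` has zero crosses at the (1-based) positions
`p, p+1, …, p+N−1`.  Then `A ⬝ V_n(Θ)` is strictly lower triangular. -/
theorem mul_Vn_strictly_lower_triangular {n N : ℕ} (hN : 1 ≤ N) (hn : N < n)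
    (g₁ g₂ g₃ g₄ : ℝ → ℂ)
    (hg₁ : g₁ 0 = 1) (hg₄ : g₄ 0 = 1) (hg₂ : g₂ 0 = 0) (hg₃ : g₃ 0 = 0)
    (hunitary : ∀ a b : ℕ, 1 ≤ a → a < b → b ≤ n → ∀ θ ∈ Set.Icc (0 : ℝ) 1,
      uSwap n g₁ g₂ g₃ g₄ a b θ ∈ Matrix.unitaryGroup (Fin n) ℂ)
    (Θ : ℕ → ℝ) (hΘmem : ∀ p, 1 ≤ p → p ≤ n → Θ p ∈ Set.Icc (0 : ℝ) 1)
    (hΘ1 : Θ 1 = 1)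
    (hΘtail : ∀ p, n - N + 1 ≤ p → p ≤ n → Θ p = 0)
    (hΘsparse : ∀ p q, 1 ≤ p → p < q → q < p + N → q ≤ n → Θ p ≠ 0 → Θ q = 0)
    (A : Matrix (Fin n) (Fin n) ℂ)
    (hrad : DiagRadiusLE A N)
    (hcross : ∀ p, 1 ≤ p → p ≤ n → 0 < Θ p →
      ∀ i : Fin n, p ≤ (i : ℕ) + 1 → (i : ℕ) + 1 < p + N → HasZeroCross A i) :
    ∀ i j : Fin n, (i : ℕ) ≤ (j : ℕ) → (A * Vn n N g₁ g₂ g₃ g₄ Θ) i j = 0 :=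
  mul_Vn_strictly_lower_triangular_general hn g₁ g₂ g₃ g₄ hg₁ hg₄ hg₂ hg₃ Θ hΘmem hΘ1 hΘtail
    hΘsparse A hrad hcross
end

section
/- Let X be a compact topological space, let f : X → M_n(ℂ) be continuous, and let ε > 0. Then there exists a continuous f′ : X → M_n(ℂ) such that: (i) ‖f(x) − f′(x)‖ < ε for every x ∈ X; (ii) for all indices s, t and all x ∈ X, if f(x)_{s,t} = 0 then f′(x)_{s,t} = 0; and (iii) for every pair of indices (s,t) there is an open set U_{s,t} ⊆ X containing {x ∈ X : f(x)_{s,t} = 0} such that f′(x)_{s,t} = 0 for all x ∈ U_{s,t}. -/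
/-!
Apply soft thresholding `z ↦ max 0 (‖z‖ - δ) / ‖z‖ • z` with `δ = ε / 2` to every entry of `f`.
It is continuous, moves each entry by at most `δ`, and kills every entry on the open set where
that entry of `f` has norm `< δ`; since the matrix norm is the entrywise sup norm, `f'` is
within `δ < ε` of `f`.
-/

attribute [local instance] Matrix.normedAddCommGroup

section SoftThreshold

variable {E : Type*} [NormedAddCommGroup E] [NormedSpace ℝ E]

noncomputable def softThreshold (δ : ℝ) (z : E) : E := (max 0 (‖z‖ - δ) / ‖z‖) • z

lemma softThreshold_eq_zero_of_norm_le {δ : ℝ} {z : E} (h : ‖z‖ ≤ δ) :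
    softThreshold δ z = 0 := by
  simp [softThreshold, max_eq_left (sub_nonpos.mpr h)]

@[simp]
lemma softThreshold_zero (δ : ℝ) : softThreshold δ (0 : E) = 0 := by
  simp [softThreshold]

lemma norm_sub_softThreshold_le {δ : ℝ} (hδ : 0 ≤ δ) (z : E) : ‖z - softThreshold δ z‖ ≤ δ := by
  rcases le_or_gt ‖z‖ δ with h | h
  · rwa [softThreshold_eq_zero_of_norm_le h, sub_zero]
  · have hz : ‖z‖ ≠ 0 := (hδ.trans_lt h).ne'
    have hscale : z - softThreshold δ z = (δ / ‖z‖) • z := by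
      rw [softThreshold, max_eq_right (by linarith), sub_div, div_self hz, sub_smul, one_smul,
        sub_sub_cancel]
    rw [hscale, norm_smul, Real.norm_of_nonneg (by positivity), div_mul_cancel₀ _ hz]

lemma continuous_softThreshold {δ : ℝ} (hδ : 0 < δ) : Continuous (softThreshold (E := E) δ) := by
  refine continuous_iff_continuousAt.mpr fun z => ?_
  rcases lt_or_ge ‖z‖ δ with h | h
  · have hzero : (fun _ => (0 : E)) =ᶠ[nhds z] softThreshold δ := by
      filter_upwards [(isOpen_lt continuous_norm continuous_const).mem_nhds h] with w hw
      exact (softThreshold_eq_zero_of_norm_le (le_of_lt hw)).symm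
    exact continuousAt_const.congr hzero
  · have hz : ‖z‖ ≠ 0 := (hδ.trans_le h).ne'
    exact ((continuous_const.max (continuous_norm.sub continuous_const)).continuousAt.div
      continuous_norm.continuousAt hz).smul continuousAt_id

end SoftThreshold

lemma Matrix.norm_sub_map_softThreshold_le {m n E : Type*} [Fintype m] [Fintype n]
    [NormedAddCommGroup E] [NormedSpace ℝ E] {δ : ℝ} (hδ : 0 ≤ δ) (A : Matrix m n E) :
    ‖A - A.map (softThreshold δ)‖ ≤ δ :=
  (Matrix.norm_le_iff hδ).mpr fun i j => norm_sub_softThreshold_le hδ (A i j)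

theorem entrywise_flattening_general {X : Type*} [TopologicalSpace X]
    {n : ℕ} (f : X → Matrix (Fin n) (Fin n) ℂ) (hf : Continuous f)
    (ε : ℝ) (hε : 0 < ε) :
    ∃ f' : X → Matrix (Fin n) (Fin n) ℂ,
      Continuous f' ∧
      (∀ x, ‖f x - f' x‖ < ε) ∧
      (∀ (s t : Fin n) (x : X), f x s t = 0 → f' x s t = 0) ∧
      (∀ s t : Fin n, ∃ U : Set X, IsOpen U ∧ {x : X | f x s t = 0} ⊆ U ∧
        ∀ x ∈ U, f' x s t = 0) := by
  have hδ : 0 < ε / 2 := half_pos hε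
  refine ⟨fun x => (f x).map (softThreshold (ε / 2)), ?_, ?_, ?_, ?_⟩
  · exact hf.matrix_map (continuous_softThreshold hδ)
  · exact fun x => (Matrix.norm_sub_map_softThreshold_le hδ.le (f x)).trans_lt (half_lt_self hε)
  · intro s t x hx
    simp [hx]
  · intro s t
    refine ⟨{x | ‖f x s t‖ < ε / 2}, isOpen_lt (hf.matrix_elem s t).norm continuous_const,
      fun x hx => ?_, fun x hx => softThreshold_eq_zero_of_norm_le (le_of_lt hx)⟩
    simpa [Set.mem_ofPred_eq.mp hx] using hδ

/-- Let `X` be a compact topological space, `f : X → M_n(ℂ)` continuous and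
`ε > 0`.  Then there is a continuous `f' : X → M_n(ℂ)` with `‖f x − f' x‖ < ε` for every
`x`, such that `f' x s t = 0` whenever `f x s t = 0`, and such that for every entry
`(s, t)` there is an open set `U ⊆ X` containing `{x : f x s t = 0}` on which the
`(s, t)` entry of `f'` vanishes identically. -/
theorem entrywise_flattening {X : Type*} [TopologicalSpace X] [CompactSpace X]
    {n : ℕ} (f : X → Matrix (Fin n) (Fin n) ℂ) (hf : Continuous f)
    (ε : ℝ) (hε : 0 < ε) :
    ∃ f' : X → Matrix (Fin n) (Fin n) ℂ,
      Continuous f' ∧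
      (∀ x, ‖f x - f' x‖ < ε) ∧
      (∀ (s t : Fin n) (x : X), f x s t = 0 → f' x s t = 0) ∧
      (∀ s t : Fin n, ∃ U : Set X, IsOpen U ∧ {x : X | f x s t = 0} ⊆ U ∧
        ∀ x ∈ U, f' x s t = 0) :=
  entrywise_flattening_general f hf ε hε
end
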